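/- arXiv:math/0601119 — 6 statements merged into one kernel-verified Lean document; each statement's English description precedes it below -/
import Mathlib

section
/- Let n ≥ 1 be an integer and P an infinite partially ordered set. The order of P is the intersection of n linear orders each of order type ω if and only if the order of P is the intersection of n linear orders and P has minimal type. -/
open Set

/-- `s` is an initial segment of the finite set `t` (w.r.t. increasing enumerations). -/
def InitSeg (s t : Finset ℕ) : Prop :=
  s ⊆ t ∧ ∀ x ∈ s, ∀ y ∈ t, y ∉ s → x < y

/-- `s` is an initial segment of the set `X ⊆ ℕ`. -/
def InitSegSet (s : Finset ℕ) (X : Set ℕ) : Prop :=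
  ↑s ⊆ X ∧ ∀ x ∈ s, ∀ y ∈ X, y ∉ s → x < y

/-- The union of a family of finite subsets of `ℕ`. -/
def unionOf (B : Set (Finset ℕ)) : Set ℕ := ⋃ s ∈ B, (s : Set ℕ)

/-- `B` is a block: `B` is infinite and every infinite subset of `⋃ B` has a nonempty
initial segment belonging to `B`. -/
def IsBlock (B : Set (Finset ℕ)) : Prop :=
  B.Infinite ∧ ∀ X : Set ℕ, X ⊆ unionOf B → X.Infinite →
    ∃ s ∈ B, s.Nonempty ∧ InitSegSet s X

/-- `B` is a barrier: a block no member of which is a proper subset of another member. -/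
def IsBarrier (B : Set (Finset ℕ)) : Prop :=
  IsBlock B ∧ ∀ s ∈ B, ∀ t ∈ B, s ⊆ t → s = t

/-- `B` is a thin block: a block which is an antichain under the initial-segment order. -/
def IsThinBlock (B : Set (Finset ℕ)) : Prop :=
  IsBlock B ∧ ∀ s ∈ B, ∀ t ∈ B, InitSeg s t → s = t

/-- `s ◁ t`: there is `r` such that `s` is a proper initial segment of `r` and `t` is
obtained from `r` by removing its least element. -/
def Tri (s t : Finset ℕ) : Prop :=
  ∃ r : Finset ℕ, InitSeg s r ∧ s ≠ r ∧ ∃ a ∈ r, (∀ b ∈ r, a ≤ b) ∧ t = r.erase a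

/-- The map `f` is good on `B` w.r.t. the quasi-order `le`. -/
def GoodPair {Q : Type*} (le : Q → Q → Prop) (B : Set (Finset ℕ)) (f : Finset ℕ → Q) : Prop :=
  ∃ s ∈ B, ∃ t ∈ B, Tri s t ∧ le (f s) (f t)

/-- A quasi-order is better-quasi-ordered if every map from every barrier into it is good. -/
def IsBqo {Q : Type*} (le : Q → Q → Prop) : Prop :=
  ∀ B : Set (Finset ℕ), IsBarrier B → ∀ f : Finset ℕ → Q, GoodPair le B f

/-- A quasi-order is well-quasi-ordered if it has no infinite strictly descending sequence
and no infinite antichain. -/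
def IsWqo {Q : Type*} (le : Q → Q → Prop) : Prop :=
  (¬ ∃ f : ℕ → Q, ∀ n, le (f (n + 1)) (f n) ∧ ¬ le (f n) (f (n + 1))) ∧
    ¬ ∃ f : ℕ → Q, ∀ m n : ℕ, m ≠ n → ¬ le (f m) (f n)

/-- The strict lexicographic order on finite subsets of `ℕ` (via increasing enumerations;
a proper initial segment is lexicographically smaller). -/
def lexLT (s t : Finset ℕ) : Prop :=
  List.Lex (· < ·) (s.sort (· ≤ ·)) (t.sort (· ≤ ·))

/-- The order type of `B` under the lexicographic order is at most `α`: there is a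
map of `B` into the ordinals `< α` which is strictly increasing w.r.t. `lexLT`. -/
def TypeLE (B : Set (Finset ℕ)) (α : Ordinal) : Prop :=
  ∃ g : Finset ℕ → Ordinal, (∀ s ∈ B, g s < α) ∧
    ∀ s ∈ B, ∀ t ∈ B, lexLT s t → g s < g t

/-- A quasi-order is `α`-better-quasi-ordered if every map from a barrier of order type
at most `α` into it is good. -/
def IsAlphaBqo (α : Ordinal) {Q : Type*} (le : Q → Q → Prop) : Prop :=
  ∀ B : Set (Finset ℕ), IsBarrier B → TypeLE B α →
    ∀ f : Finset ℕ → Q, GoodPair le B f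

/-- Domination quasi-order on subsets of a quasi-ordered set. -/
def DomRel {Q : Type*} (le : Q → Q → Prop) (A B : Set Q) : Prop :=
  ∀ a ∈ A, ∃ b ∈ B, le a b

/-- `I` is an ideal: nonempty, downward closed and up-directed. -/
def IsIdealRel {Q : Type*} (le : Q → Q → Prop) (I : Set Q) : Prop :=
  I.Nonempty ∧ (∀ x y, le x y → y ∈ I → x ∈ I) ∧
    ∀ x ∈ I, ∀ y ∈ I, ∃ z ∈ I, le x z ∧ le y z

/-- `I` is principal: it has a greatest element. -/
def IsPrincipalRel {Q : Type*} (le : Q → Q → Prop) (I : Set Q) : Prop :=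
  ∃ a ∈ I, ∀ x ∈ I, le x a

/-- A maximal antichain: an antichain not properly contained in any other antichain. -/
def IsMaxAntichainRel {Q : Type*} (le : Q → Q → Prop) (A : Set Q) : Prop :=
  IsAntichain le A ∧ ∀ B : Set Q, IsAntichain le B → A ⊆ B → A = B

/-- An interval order: no `a < b`, `c < d` with each of `a, b` incomparable to each
of `c, d`. -/
def IsIntervalOrder (P : Type*) [Preorder P] : Prop :=
  ¬ ∃ a b c d : P, a < b ∧ c < d ∧
    ¬ a ≤ c ∧ ¬ c ≤ a ∧ ¬ a ≤ d ∧ ¬ d ≤ a ∧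
    ¬ b ≤ c ∧ ¬ c ≤ b ∧ ¬ b ≤ d ∧ ¬ d ≤ b

/-- `a ≤_pred b` iff every strict predecessor of `a` is a strict predecessor of `b`. -/
def predLE {P : Type*} [PartialOrder P] (a b : P) : Prop := ∀ x, x < a → x < b

/-- `a ≤_succ b` iff every strict successor of `b` is a strict successor of `a`. -/
def succLE {P : Type*} [PartialOrder P] (a b : P) : Prop := ∀ y, b < y → a < y

/-- `a ≤_crit b` iff `a ≤_pred b` and `a ≤_succ b`. -/
def critLE {P : Type*} [PartialOrder P] (a b : P) : Prop := predLE a b ∧ succLE a b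

/-- An infinite poset has minimal type if every proper initial segment is finite. -/
def HasMinimalType (P : Type*) [PartialOrder P] : Prop :=
  Infinite P ∧ ∀ I : Set P, IsLowerSet I → I ≠ Set.univ → I.Finite

/-- In a poset of minimal type, the set of elements not above `x` is finite. -/
lemma notLE_finite {P : Type*} [PartialOrder P] (h : HasMinimalType P) (x : P) :
    {z : P | ¬ x ≤ z}.Finite := by
  apply h.2
  · intro a b hba ha
    exact fun hxb => ha (hxb.trans hba)
  · intro hu
    have : x ∈ {z : P | ¬ x ≤ z} := hu ▸ Set.mem_univ x
    exact this le_rfl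

/-- A linear order on an infinite type in which every element has finitely many strict
predecessors is isomorphic to `ℕ`. -/
lemma lin_equiv_nat {P : Type*} [Infinite P] (L : P → P → Prop) (hL : IsLinearOrder P L)
    (hfin : ∀ x : P, {y : P | L y x ∧ y ≠ x}.Finite) :
    ∃ e : P ≃ ℕ, ∀ x y : P, L x y ↔ e x ≤ e y := by
  classical
  letI := hL
  set f : P → ℕ := fun x => (hfin x).toFinset.card with hf
  have hmono : ∀ x y : P, L x y → x ≠ y → f x < f y := by
    intro x y hxy hne
    apply Finset.card_lt_card
    constructor
    · intro z hz
      simp only [Set.Finite.mem_toFinset, Set.mem_setOf_eq] at hz ⊢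
      refine ⟨trans_of L hz.1 hxy, ?_⟩
      rintro rfl
      exact hne (antisymm_of L hxy hz.1)
    · intro hsub
      have hx : x ∈ (hfin y).toFinset := by
        simp only [Set.Finite.mem_toFinset, Set.mem_setOf_eq]
        exact ⟨hxy, hne⟩
      have := hsub hx
      simp only [Set.Finite.mem_toFinset, Set.mem_setOf_eq] at this
      exact this.2 rfl
  have hinj : Function.Injective f := by
    intro x y hxy
    by_contra hne
    rcases total_of L x y with h | h
    · exact absurd hxy (hmono x y h hne).ne
    · exact absurd hxy.symm (hmono y x h (Ne.symm hne)).ne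
  have hlower : ∀ x : P, ∀ m < f x, ∃ z, f z = m := by
    intro x m hm
    have himg : ((hfin x).toFinset.image f) = Finset.range (f x) := by
      apply Finset.eq_of_subset_of_card_le
      · intro k hk
        simp only [Finset.mem_image] at hk
        obtain ⟨z, hz, rfl⟩ := hk
        simp only [Set.Finite.mem_toFinset, Set.mem_setOf_eq] at hz
        exact Finset.mem_range.mpr (hmono z x hz.1 hz.2)
      · rw [Finset.card_range, Finset.card_image_of_injective _ hinj]
    have hmem : m ∈ (hfin x).toFinset.image f := by
      rw [himg]; exact Finset.mem_range.mpr hm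
    obtain ⟨z, _, hz⟩ := Finset.mem_image.mp hmem
    exact ⟨z, hz⟩
  have hsurj : Function.Surjective f := by
    intro m
    have hrange : (Set.range f).Infinite := Set.infinite_range_of_injective hinj
    obtain ⟨k, hk, hmk⟩ := hrange.exists_gt m
    obtain ⟨x, rfl⟩ := hk
    exact hlower x m hmk
  refine ⟨Equiv.ofBijective f ⟨hinj, hsurj⟩, ?_⟩
  intro x y
  constructor
  · intro h
    rcases eq_or_ne x y with rfl | hne
    · exact le_rfl
    · exact (hmono x y h hne).le
  · intro h
    by_contra hxy
    rcases total_of L x y with h' | h'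
    · exact hxy h'
    · have hne : y ≠ x := by rintro rfl; exact hxy (refl_of L _)
      exact absurd h (not_le.mpr (hmono y x h' hne))

/-- For `n ≥ 1` and an infinite poset `P`: the order of `P` is the intersection of `n`
linear orders of order type `ω` if and only if the order of `P` is the intersection of
`n` linear orders and `P` has minimal type. -/
theorem stmt13 {P : Type*} [PartialOrder P] (hinf : Infinite P) (n : ℕ) (hn : 1 ≤ n) :
    (∃ L : Fin n → (P → P → Prop), (∀ i, IsLinearOrder P (L i)) ∧
        (∀ i, ∃ e : P ≃ ℕ, ∀ x y : P, L i x y ↔ e x ≤ e y) ∧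
        (∀ x y : P, x ≤ y ↔ ∀ i, L i x y)) ↔
    ((∃ L : Fin n → (P → P → Prop), (∀ i, IsLinearOrder P (L i)) ∧
        (∀ x y : P, x ≤ y ↔ ∀ i, L i x y)) ∧ HasMinimalType P) := by
  constructor
  · rintro ⟨L, hlin, he, hint⟩
    refine ⟨⟨L, hlin, hint⟩, hinf, ?_⟩
    intro I hI hne
    obtain ⟨z, hz⟩ : ∃ z, z ∉ I := by
      by_contra h
      push_neg at h
      exact hne (Set.eq_univ_of_forall h)
    choose e he' using he
    have hsub : I ⊆ ⋃ i, {x | e i x < e i z} := by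
      intro x hx
      have hzx : ¬ z ≤ x := fun h => hz (hI h hx)
      rw [hint] at hzx
      push_neg at hzx
      obtain ⟨i, hi⟩ := hzx
      have : e i x < e i z := lt_of_not_ge (fun hle => hi ((he' i z x).mpr hle))
      exact Set.mem_iUnion.mpr ⟨i, this⟩
    refine Set.Finite.subset (Set.finite_iUnion fun i => ?_) hsub
    have : {x | e i x < e i z} = (e i) ⁻¹' (Set.Iio (e i z)) := rfl
    rw [this]
    exact Set.Finite.preimage ((e i).injective.injOn) (Set.finite_Iio _)
  · rintro ⟨⟨L, hlin, hint⟩, hmt⟩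
    refine ⟨L, hlin, fun i => ?_, hint⟩
    apply lin_equiv_nat (L i) (hlin i)
    intro x
    apply (notLE_finite hmt x).subset
    intro y hy
    simp only [Set.mem_setOf_eq] at hy ⊢
    intro hxy
    have : L i x y := (hint x y).mp hxy i
    exact hy.2 ((hlin i).antisymm y x hy.1 this)
end

section
/- Let A be a finite nonempty set, let S : A^ℕ → A^ℕ be the shift map, and let F be a nonempty compact invariant subset of A^ℕ. Then the poset 𝒜(F) of finite words occurring as initial segments of members of F, under the factor ordering, has minimal type if and only if F is a minimal nonempty compact invariant subset of A^ℕ. -/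
open Set

/-- The shift map on `A^ℕ`. -/
def shiftMap {A : Type*} : (ℕ → A) → (ℕ → A) := fun f n => f (n + 1)

/-- The factor ordering on words: `u ≤ v` iff `u` is a contiguous subword of `v`. -/
def FactorLE {A : Type*} (u v : List A) : Prop := ∃ l r : List A, v = l ++ u ++ r

/-- The set of nonempty finite words which occur as initial segments of members of `F`. -/
def WordsOf {A : Type*} (F : Set (ℕ → A)) : Set (List A) :=
  {w | w ≠ [] ∧ ∃ f ∈ F, ∀ i : ℕ, ∀ h : i < w.length, w.get ⟨i, h⟩ = f i}

/-
A word `u ∉ I` of a proper downward closed `I ⊆ 𝒜(F)` bounds the lengths in `I`: if `F` is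
minimal, the points of `F` avoiding `u` form a closed invariant proper subset, hence are none,
and compactness gives a uniform `K` such that `u` occurs in every point of `F` before `K`;
so every word of `F` of length `≥ K + |u|` contains `u`. Conversely, a nonempty closed
invariant `G ⊆ F` has infinitely many words, which form a downward closed subset of `𝒜(F)`;
minimal type forces it to be all of `𝒜(F)`, and then `G = F` since `G` is closed.
-/

open Filter

section Words

variable {A : Type*}

def prefixWord (f : ℕ → A) (n : ℕ) : List A := List.ofFn fun i : Fin n => f i

lemma prefixWord_succ_mem_wordsOf {F : Set (ℕ → A)} {f : ℕ → A} (hf : f ∈ F) (n : ℕ) :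
    prefixWord f (n + 1) ∈ WordsOf F :=
  ⟨by simp [prefixWord], f, hf, fun i h => by
    simp only [prefixWord, List.get_eq_getElem, List.getElem_ofFn]⟩

lemma wordsOf_infinite {F : Set (ℕ → A)} (hF : F.Nonempty) : (WordsOf F).Infinite := by
  obtain ⟨f, hf⟩ := hF
  refine Set.infinite_of_injective_forall_mem (fun m n hmn => ?_)
    (prefixWord_succ_mem_wordsOf hf)
  simpa [prefixWord] using congrArg List.length hmn

lemma wordsOf_mono {F G : Set (ℕ → A)} (h : G ⊆ F) : WordsOf G ⊆ WordsOf F :=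
  fun _ ⟨hw, f, hf, hpre⟩ => ⟨hw, f, h hf, hpre⟩

lemma shiftMap_iterate_apply (f : ℕ → A) (k n : ℕ) : shiftMap^[k] f n = f (n + k) := by
  induction k generalizing f with
  | zero => rfl
  | succ k ih => rw [Function.iterate_succ_apply, ih]; simp only [shiftMap]; ring_nf

lemma mem_wordsOf_of_factorLE {F : Set (ℕ → A)} (hinv : shiftMap '' F ⊆ F) {u v : List A}
    (hu : u ≠ []) (huv : FactorLE u v) (hv : v ∈ WordsOf F) : u ∈ WordsOf F := by
  obtain ⟨l, r, rfl⟩ := huv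
  obtain ⟨-, f, hf, hpre⟩ := hv
  refine ⟨hu, shiftMap^[l.length] f, (Set.mapsTo_iff_image_subset.2 hinv).iterate _ hf,
    fun i h => ?_⟩
  have hi : l.length + i < (l ++ u ++ r).length := by simp; omega
  rw [shiftMap_iterate_apply, Nat.add_comm, ← hpre _ hi]
  simp [List.getElem_append_right, h]

def OccursAt (u : List A) (k : ℕ) (f : ℕ → A) : Prop :=
  ∀ i (h : i < u.length), f (k + i) = u[i]

lemma occursAt_zero_of_mem_wordsOf {F : Set (ℕ → A)} {u : List A} (hu : u ∈ WordsOf F) :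
    ∃ f ∈ F, OccursAt u 0 f := by
  obtain ⟨-, f, hf, hpre⟩ := hu
  exact ⟨f, hf, fun i h => by simpa using (hpre i h).symm⟩

end Words

section Topology

variable {A : Type*} [TopologicalSpace A] [DiscreteTopology A]

lemma subset_of_wordsOf_subset {F G : Set (ℕ → A)} (hG : IsClosed G)
    (h : WordsOf F ⊆ WordsOf G) : F ⊆ G := by
  intro f hf
  choose g hg hagree using fun n => (h (prefixWord_succ_mem_wordsOf hf n)).2
  refine hG.mem_of_tendsto (b := atTop) (tendsto_pi_nhds.2 fun i => ?_)
    (Eventually.of_forall hg)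
  rw [nhds_discrete, tendsto_pure]
  filter_upwards [eventually_ge_atTop (α := ℕ) i] with n hn
  have hi : i < (prefixWord f (n + 1)).length := by simp [prefixWord]; omega
  simpa only [prefixWord, List.get_eq_getElem, List.getElem_ofFn] using (hagree n i hi).symm

lemma isOpen_setOf_occursAt (u : List A) (k : ℕ) : IsOpen {f : ℕ → A | OccursAt u k f} := by
  have : {f : ℕ → A | OccursAt u k f} =
      ⋂ i : Fin u.length, (fun f : ℕ → A => f (k + i)) ⁻¹' {u[i]} := by
    ext f
    simp [OccursAt, Fin.forall_iff]
  rw [this]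
  exact isOpen_iInter_of_finite fun i => (isOpen_discrete _).preimage (continuous_apply _)

variable {F : Set (ℕ → A)}

lemma exists_occursAt_of_minimal (hinv : shiftMap '' F ⊆ F) (hcomp : IsCompact F)
    (hmin : ∀ G : Set (ℕ → A), G ⊆ F → G.Nonempty → IsCompact G → shiftMap '' G ⊆ G →
      G = F)
    {u : List A} (hu : u ∈ WordsOf F) {f : ℕ → A} (hf : f ∈ F) : ∃ k, OccursAt u k f := by
  by_contra! hno
  set G := F ∩ {g | ∀ k, ¬ OccursAt u k g}
  have hGclosed : IsClosed {g : ℕ → A | ∀ k, ¬ OccursAt u k g} := by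
    simp only [Set.ofPred_forall]
    exact isClosed_iInter fun k => (isOpen_setOf_occursAt u k).isClosed_compl
  have hGinv : shiftMap '' G ⊆ G := by
    rintro _ ⟨g, ⟨hg, hgno⟩, rfl⟩
    refine ⟨hinv ⟨g, hg, rfl⟩, fun k hk => hgno (k + 1) fun i hi => ?_⟩
    simpa [shiftMap, Nat.add_right_comm] using hk i hi
  have hGF := hmin G Set.inter_subset_left ⟨f, hf, hno⟩ (hcomp.inter_right hGclosed) hGinv
  obtain ⟨g, hg, hocc⟩ := occursAt_zero_of_mem_wordsOf hu
  exact (hGF ▸ hg).2 0 hocc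

lemma exists_bound_occursAt_of_minimal (hinv : shiftMap '' F ⊆ F) (hcomp : IsCompact F)
    (hmin : ∀ G : Set (ℕ → A), G ⊆ F → G.Nonempty → IsCompact G → shiftMap '' G ⊆ G →
      G = F)
    {u : List A} (hu : u ∈ WordsOf F) : ∃ K, ∀ f ∈ F, ∃ k ≤ K, OccursAt u k f := by
  set U : ℕ → Set (ℕ → A) := fun K => ⋃ k ≤ K, {f | OccursAt u k f}
  have hcover : F ⊆ ⋃ K, U K := fun f hf => by
    obtain ⟨k, hk⟩ := exists_occursAt_of_minimal hinv hcomp hmin hu hf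
    exact Set.mem_iUnion.2 ⟨k, Set.mem_iUnion₂.2 ⟨k, le_rfl, hk⟩⟩
  have hmono : Monotone U := fun K L hKL => Set.biUnion_mono (fun k hk => le_trans hk hKL)
    fun _ _ => subset_rfl
  obtain ⟨K, hK⟩ := hcomp.elim_directed_cover U
    (fun K => isOpen_biUnion fun k _ => isOpen_setOf_occursAt u k) hcover hmono.directed_le
  exact ⟨K, fun f hf => by simpa [U] using hK hf⟩

end Topology

lemma factorLE_of_occursAt {A : Type*} {u v : List A} {f : ℕ → A}
    (hv : ∀ i (h : i < v.length), v[i] = f i) {k : ℕ} (hocc : OccursAt u k f)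
    (hlen : k + u.length ≤ v.length) : FactorLE u v := by
  have hu : (v.drop k).take u.length = u :=
    List.ext_getElem (by simp; omega) fun i h1 h2 => by
      simp only [List.getElem_take, List.getElem_drop]
      rw [hv, hocc]
  have hsplit := List.take_append_drop u.length (v.drop k)
  rw [hu] at hsplit
  refine ⟨v.take k, (v.drop k).drop u.length, ?_⟩
  rw [List.append_assoc, hsplit, List.take_append_drop]

section MinimalType

variable {A : Type*} {F : Set (ℕ → A)}

lemma eq_of_minimalType [TopologicalSpace A] [DiscreteTopology A]
    (htype : ∀ I : Set (WordsOf F),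
      (∀ u v : WordsOf F, FactorLE u.1 v.1 → v ∈ I → u ∈ I) → I ≠ univ → I.Finite)
    {G : Set (ℕ → A)} (hGF : G ⊆ F) (hG : G.Nonempty) (hGclosed : IsClosed G)
    (hGinv : shiftMap '' G ⊆ G) : G = F := by
  set I : Set (WordsOf F) := Subtype.val ⁻¹' WordsOf G
  have hdown : ∀ u v : WordsOf F, FactorLE u.1 v.1 → v ∈ I → u ∈ I :=
    fun u _ huv hv => mem_wordsOf_of_factorLE hGinv u.2.1 huv hv
  have hinfinite : ¬ I.Finite := fun hfin => wordsOf_infinite hG <| by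
    simpa [I, Subtype.image_preimage_coe, inter_eq_right.2 (wordsOf_mono hGF)] using
      hfin.image Subtype.val
  have hI : I = univ := by_contra (hinfinite ∘ htype I hdown)
  refine hGF.antisymm (subset_of_wordsOf_subset hGclosed fun w hw => ?_)
  exact (show (⟨w, hw⟩ : WordsOf F) ∈ I from hI ▸ mem_univ _)

lemma finite_of_minimal [Finite A] [TopologicalSpace A] [DiscreteTopology A]
    (hinv : shiftMap '' F ⊆ F) (hcomp : IsCompact F)
    (hmin : ∀ G : Set (ℕ → A), G ⊆ F → G.Nonempty → IsCompact G → shiftMap '' G ⊆ G →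
      G = F)
    {I : Set (WordsOf F)} (hdown : ∀ u v : WordsOf F, FactorLE u.1 v.1 → v ∈ I → u ∈ I)
    (hI : I ≠ univ) : I.Finite := by
  obtain ⟨u, hu⟩ := ne_univ_iff_exists_notMem I |>.1 hI
  obtain ⟨K, hK⟩ := exists_bound_occursAt_of_minimal hinv hcomp hmin u.2
  refine ((List.finite_length_le A (K + u.1.length)).preimage
    Subtype.val_injective.injOn).subset fun v hv => ?_
  by_contra! hlong
  obtain ⟨-, f, hf, hpre⟩ := v.2
  obtain ⟨k, hk, hocc⟩ := hK f hf
  exact hu (hdown u v (factorLE_of_occursAt hpre hocc (by simp at hlong; omega)) hv)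

end MinimalType

theorem stmt14_general {A : Type*} [Fintype A]
    [TopologicalSpace A] [DiscreteTopology A]
    (F : Set (ℕ → A)) (hne : F.Nonempty) (hcomp : IsCompact F)
    (hinv : shiftMap '' F ⊆ F) :
    ((WordsOf F).Infinite ∧
      ∀ I : Set (WordsOf F),
        (∀ u v : WordsOf F, FactorLE u.1 v.1 → v ∈ I → u ∈ I) → I ≠ Set.univ → I.Finite) ↔
    (∀ G : Set (ℕ → A), G ⊆ F → G.Nonempty → IsCompact G → shiftMap '' G ⊆ G → G = F) :=
  ⟨fun ⟨_, htype⟩ _ hGF hG hGcomp hGinv =>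
      eq_of_minimalType htype hGF hG hGcomp.isClosed hGinv,
    fun hmin => ⟨wordsOf_infinite hne, fun _ hdown hI =>
      finite_of_minimal hinv hcomp hmin hdown hI⟩⟩

/-- For a finite nonempty alphabet `A` and a nonempty compact shift-invariant subset `F`
of `A^ℕ`: the poset `𝒜(F)` of finite words occurring as initial segments of members of
`F`, under the factor ordering, has minimal type if and only if `F` is a minimal
nonempty compact invariant set. -/
theorem stmt14 {A : Type*} [Fintype A] [Nonempty A]
    [TopologicalSpace A] [DiscreteTopology A]
    (F : Set (ℕ → A)) (hne : F.Nonempty) (hcomp : IsCompact F)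
    (hinv : shiftMap '' F ⊆ F) :
    ((WordsOf F).Infinite ∧
      ∀ I : Set (WordsOf F),
        (∀ u v : WordsOf F, FactorLE u.1 v.1 → v ∈ I → u ∈ I) → I ≠ Set.univ → I.Finite) ↔
    (∀ G : Set (ℕ → A), G ⊆ F → G.Nonempty → IsCompact G → shiftMap '' G ⊆ G → G = F) :=
  stmt14_general F hne hcomp hinv
end

section
/- Let P be a partially ordered set such that AM(P) is well-founded under domination or P is well-founded. Then for all x,y ∈ P: (1) ↑φ(x) = Φ(x); (2) φ(x) is a maximal antichain of P containing x, and φ(x) ≤_dom A for every maximal antichain A of P containing x; (3) x < y if and only if φ(x) ≤_dom φ(y), φ(x) ≠ φ(y), and x ∉ φ(y); (4) P is well-founded. -/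
open Set

/-- `Φ(x)`: the complement of the strict down-set of `x`. -/
def PhiSet {P : Type*} [PartialOrder P] (x : P) : Set P := {z : P | ¬ z < x}

/-- `φ(x)`: the set of minimal elements of `Φ(x)`. -/
def phiSet {P : Type*} [PartialOrder P] (x : P) : Set P :=
  {z ∈ PhiSet x | ∀ y ∈ PhiSet x, y ≤ z → y = z}

section Aux
variable {P : Type*} [PartialOrder P]

/-- Zorn: in any subset `D` containing `v` there is an antichain containing `v`
which is maximal in the sense that every element of `D` is comparable to a member. -/
lemma aux_zorn_antichain (D : Set P) (v : P) (hv : v ∈ D) :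
    ∃ A : Set P, v ∈ A ∧ A ⊆ D ∧ IsAntichain (· ≤ ·) A ∧
      ∀ z ∈ D, ∃ b ∈ A, z ≤ b ∨ b ≤ z := by
  set S : Set (Set P) := {A | v ∈ A ∧ A ⊆ D ∧ IsAntichain (· ≤ ·) A} with hS
  obtain ⟨M, -, hMmem, hMmax⟩ :=
    zorn_subset_nonempty S (fun c hcS hchain hcne => by
      refine ⟨⋃₀ c, ⟨?_, ?_, ?_⟩, fun s hs => Set.subset_sUnion_of_mem hs⟩
      · exact ⟨hcne.some, hcne.some_mem, (hcS hcne.some_mem).1⟩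
      · exact fun x ⟨s, hs, hxs⟩ => (hcS hs).2.1 hxs
      · intro a ⟨s, hs, has⟩ b ⟨t, ht, hbt⟩ hab
        rcases hchain.total hs ht with hst | hts
        · exact (hcS ht).2.2 (hst has) hbt hab
        · exact (hcS hs).2.2 has (hts hbt) hab)
    {v} ⟨rfl, Set.singleton_subset_iff.2 hv, Set.Subsingleton.isAntichain
      (Set.subsingleton_singleton) _⟩
  refine ⟨M, hMmem.1, hMmem.2.1, hMmem.2.2, fun z hz => ?_⟩
  by_contra hzc
  push_neg at hzc
  have hzM : z ∉ M := fun hzM => (hzc z hzM).1 le_rfl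
  have hins : insert z M ∈ S := by
    refine ⟨Set.mem_insert_of_mem _ hMmem.1, Set.insert_subset hz hMmem.2.1, ?_⟩
    intro a ha b hb hab
    rcases ha with rfl | ha
    · rcases hb with rfl | hb
      · exact absurd rfl hab
      · exact (hzc b hb).1
    · rcases hb with rfl | hb
      · exact (hzc a ha).2
      · exact hMmem.2.2 ha hb hab
  exact hzM (hMmax hins (Set.subset_insert _ _) (Set.mem_insert z M))

/-- Step: refine a maximal antichain below itself through a strictly smaller element. -/
lemma aux_step (A : Set P) (hA : IsAntichain (· ≤ ·) A)
    (hAmax : ∀ z : P, ∃ b ∈ A, z ≤ b ∨ b ≤ z)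
    (u v : P) (hu : u ∈ A) (hv : v < u) :
    ∃ A' : Set P, v ∈ A' ∧ IsAntichain (· ≤ ·) A' ∧
      (∀ z : P, ∃ b ∈ A', z ≤ b ∨ b ≤ z) ∧
      (∀ a ∈ A', ∃ b ∈ A, a ≤ b) ∧ ¬ ∃ b ∈ A', u ≤ b := by
  set D : Set P := {z | ∃ b ∈ A, z ≤ b} with hD
  obtain ⟨A', hvA', hA'D, hA'anti, hA'max⟩ := aux_zorn_antichain D v ⟨u, hu, hv.le⟩
  have hsub : ∀ a ∈ A', ∃ b ∈ A, a ≤ b := fun a ha => hA'D ha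
  have hnotu : ¬ ∃ b ∈ A', u ≤ b := by
    rintro ⟨b, hbA', hub⟩
    obtain ⟨a', ha', hba'⟩ := hsub b hbA'
    have : u = a' := by
      by_contra hne
      exact hA hu ha' hne (hub.trans hba')
    subst this
    have hbu : b = u := le_antisymm hba' hub
    subst hbu
    have : v ≠ b := fun hvb => absurd (hvb ▸ hv) (lt_irrefl b)
    exact hA'anti hvA' hbA' this hv.le
  refine ⟨A', hvA', hA'anti, fun z => ?_, hsub, hnotu⟩
  by_cases hzD : z ∈ D
  · exact hA'max z hzD
  · obtain ⟨a, haA, hza⟩ := hAmax z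
    have haz : a < z := by
      rcases hza with hza | haz
      · exact absurd ⟨a, haA, hza⟩ hzD
      · rcases lt_or_eq_of_le haz with h' | h'
        · exact h'
        · exact absurd ⟨a, haA, h' ▸ le_rfl⟩ hzD
    obtain ⟨b, hbA', hab⟩ := hA'max a ⟨a, haA, le_rfl⟩
    rcases hab with hab | hba
    · -- a ≤ b : then b = a
      obtain ⟨a'', ha'', hba''⟩ := hsub b hbA'
      have : a = a'' := by
        by_contra hne
        exact hA haA ha'' hne (hab.trans hba'')
      subst this
      have : b = a := le_antisymm hba'' hab
      subst this
      exact ⟨b, hbA', Or.inr haz.le⟩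
    · exact ⟨b, hbA', Or.inr (hba.trans haz.le)⟩

/-- Comparability with every element characterizes maximal antichains (one direction). -/
lemma aux_max_of_cmp (A : Set P) (hA : IsAntichain (· ≤ ·) A)
    (hAmax : ∀ z : P, ∃ b ∈ A, z ≤ b ∨ b ≤ z) :
    IsMaxAntichainRel (· ≤ ·) A := by
  refine ⟨hA, fun B hB hAB => ?_⟩
  apply Set.Subset.antisymm hAB
  intro b hbB
  obtain ⟨a, haA, hab⟩ := hAmax b
  have : a = b := by
    by_contra hne
    rcases hab with hab | hab
    · exact hB hbB (hAB haA) (Ne.symm hne) hab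
    · exact hB (hAB haA) hbB hne hab
  exact this ▸ haA

lemma aux_cmp_of_max (A : Set P) (hA : IsMaxAntichainRel (· ≤ ·) A) :
    ∀ z : P, ∃ b ∈ A, z ≤ b ∨ b ≤ z := by
  intro z
  by_contra hc
  push_neg at hc
  have hzA : z ∉ A := fun hz => (hc z hz).1 le_rfl
  have : IsAntichain (· ≤ ·) (insert z A) := by
    intro a ha b hb hab
    rcases ha with rfl | ha
    · rcases hb with rfl | hb
      · exact absurd rfl hab
      · exact (hc b hb).1
    · rcases hb with rfl | hb
      · exact (hc a ha).2
      · exact hA.1 ha hb hab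
  have := hA.2 _ this (Set.subset_insert _ _)
  exact hzA (this ▸ Set.mem_insert z A)

/-- Core data for the recursion: a maximal antichain containing a given point. -/
def AuxT (P : Type*) [PartialOrder P] : Type _ :=
  {A : Set P // IsAntichain (· ≤ ·) A ∧ ∀ z : P, ∃ b ∈ A, z ≤ b ∨ b ≤ z}

noncomputable def auxStep (A : AuxT P) (u v : P) (hu : u ∈ A.1) (hv : v < u) :
    {A' : AuxT P // v ∈ A'.1 ∧ (∀ a ∈ A'.1, ∃ b ∈ A.1, a ≤ b) ∧ ¬ ∃ b ∈ A'.1, u ≤ b} := by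
  have h := aux_step A.1 A.2.1 A.2.2 u v hu hv
  exact ⟨⟨h.choose, h.choose_spec.2.1, h.choose_spec.2.2.1⟩,
    h.choose_spec.1, h.choose_spec.2.2.2.1, h.choose_spec.2.2.2.2⟩

/-- If the poset is not well-founded, there is a strictly descending (by domination)
sequence of maximal antichains. -/
lemma aux_descending (x : ℕ → P) (hx : ∀ n, x (n + 1) < x n) :
    ∃ f : ℕ → {A : Set P // IsMaxAntichainRel (· ≤ ·) A},
      ∀ n : ℕ, DomRel (· ≤ ·) (f (n + 1)).1 (f n).1 ∧
        ¬ DomRel (· ≤ ·) (f n).1 (f (n + 1)).1 := by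
  have h0 := aux_zorn_antichain (Set.univ : Set P) (x 0) (Set.mem_univ _)
  let A0 : {A : AuxT P // x 0 ∈ A.1} :=
    ⟨⟨h0.choose, h0.choose_spec.2.2.1,
      fun z => h0.choose_spec.2.2.2 z (Set.mem_univ z)⟩, h0.choose_spec.1⟩
  let g : (n : ℕ) → {A : AuxT P // x n ∈ A.1} := fun n =>
    Nat.rec A0 (fun n ih =>
      ⟨(auxStep ih.1 (x n) (x (n + 1)) ih.2 (hx n)).1,
       (auxStep ih.1 (x n) (x (n + 1)) ih.2 (hx n)).2.1⟩) n
  refine ⟨fun n => ⟨(g n).1.1, aux_max_of_cmp _ (g n).1.2.1 (g n).1.2.2⟩, fun n => ?_⟩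
  have hstep := (auxStep (g n).1 (x n) (x (n + 1)) (g n).2 (hx n)).2
  constructor
  · exact fun a ha => hstep.2.1 a ha
  · intro hdom
    obtain ⟨b, hb, hxb⟩ := hdom (x n) (g n).2
    exact hstep.2.2 ⟨b, hb, hxb⟩

/-- Minimal elements below any element of `Φ(x)` exist when `P` is well-founded. -/
lemma aux_exists_min (hw : WellFoundedLT P) (x y : P) (hy : y ∈ PhiSet x) :
    ∃ z ∈ phiSet x, z ≤ y := by
  obtain ⟨m, ⟨hm1, hm2⟩, hmin⟩ :=
    hw.wf.has_min {w | w ∈ PhiSet x ∧ w ≤ y} ⟨y, hy, le_rfl⟩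
  refine ⟨m, ⟨hm1, fun w hw' hwm => ?_⟩, hm2⟩
  rcases lt_or_eq_of_le hwm with h' | h'
  · exact absurd h' (hmin w ⟨hw', hwm.trans hm2⟩)
  · exact h'

lemma aux_x_mem (x : P) : x ∈ phiSet x :=
  ⟨lt_irrefl x, fun w hw hwx => by
    rcases lt_or_eq_of_le hwx with h' | h'
    · exact absurd h' hw
    · exact h'⟩

end Aux

/-- If `AM(P)` is well-founded under domination or `P` is well-founded, then:
(1) `↑φ(x) = Φ(x)`; (2) `φ(x)` is a maximal antichain containing `x` which is dominated
by every maximal antichain containing `x`; (3) `x < y` iff `φ(x)` is strictly dominated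
by `φ(y)` and `x ∉ φ(y)`; (4) `P` is well-founded. -/
theorem stmt16 {P : Type*} [PartialOrder P]
    (h : (¬ ∃ f : ℕ → {A : Set P // IsMaxAntichainRel (· ≤ ·) A},
            ∀ n : ℕ, DomRel (· ≤ ·) (f (n + 1)).1 (f n).1 ∧
              ¬ DomRel (· ≤ ·) (f n).1 (f (n + 1)).1) ∨ WellFoundedLT P) :
    (∀ x : P, {y : P | ∃ z ∈ phiSet x, z ≤ y} = PhiSet x) ∧
    (∀ x : P, IsMaxAntichainRel (· ≤ ·) (phiSet x) ∧ x ∈ phiSet x ∧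
      ∀ A : Set P, IsMaxAntichainRel (· ≤ ·) A → x ∈ A → DomRel (· ≤ ·) (phiSet x) A) ∧
    (∀ x y : P, x < y ↔
      (DomRel (· ≤ ·) (phiSet x) (phiSet y) ∧ phiSet x ≠ phiSet y ∧ x ∉ phiSet y)) ∧
    WellFoundedLT P := by
    -- First establish well-foundedness of `P`.
  have hw : WellFoundedLT P := by
    rcases h with h | h
    · constructor
      rw [RelEmbedding.wellFounded_iff_isEmpty]
      constructor
      intro e
      exact h (aux_descending (fun n => e n) (fun n => e.map_rel_iff.2 (Nat.lt_succ_self n)))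
    · exact h
  have hphi_max : ∀ x : P, IsMaxAntichainRel (· ≤ ·) (phiSet x) := by
    intro x
    apply aux_max_of_cmp
    · intro a ha b hb hne hab
      exact hne (hb.2 a ha.1 hab)
    · intro z
      by_cases hz : z < x
      · exact ⟨x, aux_x_mem x, Or.inl hz.le⟩
      · obtain ⟨w, hw', hwz⟩ := aux_exists_min hw x z hz
        exact ⟨w, hw', Or.inr hwz⟩
  refine ⟨?_, ?_, ?_, hw⟩
  · -- (1)
    intro x
    ext y
    constructor
    · rintro ⟨z, hz, hzy⟩
      exact fun hyx => hz.1 (lt_of_le_of_lt hzy hyx)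
    · intro hy
      exact aux_exists_min hw x y hy
  · -- (2)
    intro x
    refine ⟨hphi_max x, aux_x_mem x, ?_⟩
    intro A hA hxA a ha
    obtain ⟨b, hbA, hab⟩ := aux_cmp_of_max A hA a
    rcases hab with hab | hba
    · exact ⟨b, hbA, hab⟩
    · -- b ≤ a with b ∈ A; show b = a
      have hbPhi : b ∈ PhiSet x := by
        intro hbx
        have hne : b ≠ x := fun h' => absurd (h' ▸ hbx) (lt_irrefl x)
        exact hA.1 hbA hxA hne hbx.le
      have : b = a := ha.2 b hbPhi hba
      exact ⟨b, hbA, this ▸ le_rfl⟩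
  · -- (3)
    intro x y
    constructor
    · intro hxy
      have hxny : x ∉ phiSet y := fun hx => hx.1 hxy
      refine ⟨?_, ?_, hxny⟩
      · intro z hz
        obtain ⟨b, hbA, hab⟩ := aux_cmp_of_max (phiSet y) (hphi_max y) z
        rcases hab with hab | hba
        · exact ⟨b, hbA, hab⟩
        · have hbPhiX : b ∈ PhiSet x := by
            intro hbx
            exact hbA.1 (hbx.trans hxy)
          have : b = z := hz.2 b hbPhiX hba
          exact ⟨b, hbA, this ▸ le_rfl⟩
      · intro heq
        exact hxny (heq ▸ aux_x_mem x)
    · rintro ⟨hdom, -, hxny⟩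
      by_contra hnxy
      obtain ⟨b, hbA, hxb⟩ := hdom x (aux_x_mem x)
      obtain ⟨c, hc, hcx⟩ := aux_exists_min hw y x hnxy
      have hcb : c = b := by
        by_contra hne
        exact (hphi_max y).1 hc hbA hne (hcx.trans hxb)
      rw [hcb] at hcx
      have : x = b := le_antisymm hxb hcx
      exact hxny (this ▸ hbA)
end

section
/- Let P be a partially ordered set, let ≡ be the equivalence relation x ≡ y iff x ≤_pred y and y ≤_pred x, let Q be the quotient of (P, ≤_pred) by ≡ with the induced partial order, let π : P → Q be the canonical map, and for S ⊆ P let π̄(S) be the initial segment of Q generated by {π(s) : s ∈ S}. Then: (1) π̄ is an order-embedding of AM(P), ordered by domination, into the poset of initial segments of Q ordered by inclusion, and if P is well-founded then Q order-embeds into AM(P); (2) π̄ induces an order-embedding of 𝒥^¬↓(P) into 𝒥^¬↓(Q), both ordered by inclusion; (3) if P has no infinite antichain then this embedding is surjective, so 𝒥^¬↓(P) is order-isomorphic to 𝒥^¬↓(Q). -/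
open Set

/-- The equivalence relation `x ≡ y` iff `x ≤_pred y` and `y ≤_pred x`. -/
def predSetoid (P : Type*) [PartialOrder P] : Setoid P where
  r a b := predLE a b ∧ predLE b a
  iseqv := ⟨fun _ => ⟨fun _ h => h, fun _ h => h⟩,
    fun h => ⟨h.2, h.1⟩,
    fun h1 h2 => ⟨fun x hx => h2.1 x (h1.1 x hx), fun x hx => h1.2 x (h2.2 x hx)⟩⟩

/-- The quotient `Q` of `(P, ≤_pred)` by `≡`. -/
def PredQuot (P : Type*) [PartialOrder P] := Quotient (predSetoid P)

/-- The partial order induced by `≤_pred` on the quotient `Q`. -/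
def predQuotLE {P : Type*} [PartialOrder P] : PredQuot P → PredQuot P → Prop :=
  Quotient.lift₂ (fun a b => predLE a b)
    (fun _ _ _ _ ha hb => propext
      ⟨fun h x hx => hb.1 x (h x (ha.2 x hx)), fun h x hx => hb.2 x (h x (ha.1 x hx))⟩)

/-- The canonical map `π : P → Q`. -/
def predPi {P : Type*} [PartialOrder P] (x : P) : PredQuot P :=
  Quotient.mk (predSetoid P) x

/-- `π̄(S)`: the initial segment of `Q` generated by the image of `S` under `π`. -/
def piBar {P : Type*} [PartialOrder P] (S : Set P) : Set (PredQuot P) :=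
  {q : PredQuot P | ∃ s ∈ S, predQuotLE q (predPi s)}

section Aux17

variable {P : Type*} [PartialOrder P]

private lemma predLE_refl' (a : P) : predLE a a := fun _ h => h

private lemma predLE_trans' {a b c : P} (h1 : predLE a b) (h2 : predLE b c) : predLE a c :=
  fun x hx => h2 x (h1 x hx)

private lemma le_predLE' {a b : P} (h : a ≤ b) : predLE a b := fun x hx => lt_of_lt_of_le hx h

private lemma predQuot_exists_rep (q : PredQuot P) : ∃ a : P, predPi a = q :=
  Quotient.exists_rep q

private lemma predQuotLE_refl' (q : PredQuot P) : predQuotLE q q := by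
  obtain ⟨a, rfl⟩ := predQuot_exists_rep q
  exact predLE_refl' a

private lemma predQuotLE_trans' {q r s : PredQuot P} (h1 : predQuotLE q r)
    (h2 : predQuotLE r s) : predQuotLE q s := by
  obtain ⟨a, rfl⟩ := predQuot_exists_rep q
  obtain ⟨b, rfl⟩ := predQuot_exists_rep r
  obtain ⟨c, rfl⟩ := predQuot_exists_rep s
  exact predLE_trans' h1 h2

private lemma maxAC_comp {A : Set P} (hA : IsMaxAntichainRel (· ≤ ·) A) (p : P) :
    ∃ a ∈ A, p ≤ a ∨ a ≤ p := by
  by_contra h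
  push_neg at h
  have hpA : p ∉ A := fun hp => (h p hp).1 le_rfl
  have hanti : IsAntichain (· ≤ ·) (insert p A) := by
    rintro x (rfl | hx) y (rfl | hy) hne hle
    · exact hne rfl
    · exact (h y hy).1 hle
    · exact (h x hx).2 hle
    · exact hA.1 hx hy hne hle
  have := hA.2 (insert p A) hanti (Set.subset_insert p A)
  exact hpA (this ▸ Set.mem_insert p A)

private def ACof (x : P) : Set P := {m | ¬ m < x ∧ ∀ y, ¬ y < x → ¬ y < m}

private lemma exists_min_le (h : WellFounded ((· < ·) : P → P → Prop)) {S : Set P} {p : P}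
    (hp : p ∈ S) : ∃ m, m ∈ S ∧ m ≤ p ∧ ∀ y ∈ S, ¬ y < m := by
  obtain ⟨m, hm, hmin⟩ := h.has_min (S ∩ {y | y ≤ p}) ⟨p, hp, le_rfl⟩
  exact ⟨m, hm.1, hm.2, fun y hy hlt => hmin y ⟨hy, (hlt.trans_le hm.2).le⟩ hlt⟩

private lemma mem_ACof_self (x : P) : x ∈ ACof x :=
  ⟨lt_irrefl x, fun _ hy hyx => hy hyx⟩

private lemma ACof_comp (h : WellFounded ((· < ·) : P → P → Prop)) (x p : P) :
    ∃ a ∈ ACof x, p ≤ a ∨ a ≤ p := by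
  by_cases hp : p < x
  · exact ⟨x, mem_ACof_self x, Or.inl hp.le⟩
  · obtain ⟨m, hm, hmp, hmin⟩ := exists_min_le h (show p ∈ {y : P | ¬ y < x} from hp)
    exact ⟨m, ⟨hm, hmin⟩, Or.inr hmp⟩

private lemma ACof_max (h : WellFounded ((· < ·) : P → P → Prop)) (x : P) :
    IsMaxAntichainRel (· ≤ ·) (ACof x) := by
  constructor
  · rintro a ha b hb hne hle
    exact hb.2 a ha.1 (lt_of_le_of_ne hle hne)
  · intro B hB hsub
    refine Set.Subset.antisymm hsub fun b hb => ?_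
    obtain ⟨a, ha, hc⟩ := ACof_comp h x b
    by_cases hab : a = b
    · exact hab ▸ ha
    · rcases hc with h1 | h1
      · exact absurd h1 (hB hb (hsub ha) fun he => hab he.symm)
      · exact absurd h1 (hB (hsub ha) hb hab)

private lemma ACof_dom (h : WellFounded ((· < ·) : P → P → Prop)) (x x' : P) :
    predLE x x' ↔ DomRel (· ≤ ·) (ACof x) (ACof x') := by
  constructor
  · intro hpred a ha
    by_cases hax' : a < x'
    · exact ⟨x', mem_ACof_self x', hax'.le⟩
    · refine ⟨a, ⟨hax', fun y hy hya => ?_⟩, le_rfl⟩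
      exact ha.2 y (fun hyx => hy (hpred y hyx)) hya
  · intro hdom p hpx
    by_contra hpx'
    obtain ⟨m, hm, hmp, _⟩ := exists_min_le h (show p ∈ {y : P | ¬ y < x'} from hpx')
    obtain ⟨b, hb, hxb⟩ := hdom x (mem_ACof_self x)
    exact hb.2 m hm (lt_of_le_of_lt hmp (lt_of_lt_of_le hpx hxb))

private lemma ACof_congr {x y : P} (h1 : predLE x y) (h2 : predLE y x) : ACof x = ACof y := by
  have key : ∀ z : P, z < x ↔ z < y := fun z => ⟨h1 z, h2 z⟩
  ext m
  constructor
  · rintro ⟨ha, hb⟩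
    exact ⟨fun hl => ha ((key m).mpr hl), fun u hu hl => hb u (fun q => hu ((key u).mp q)) hl⟩
  · rintro ⟨ha, hb⟩
    exact ⟨fun hl => ha ((key m).mp hl), fun u hu hl => hb u (fun q => hu ((key u).mpr q)) hl⟩

private lemma exists_chain17 {α : Type*} (r : α → α → Prop) (good : α → Prop) (a0 : α)
    (h0 : good a0) (step : ∀ a, good a → ∃ b, good b ∧ r a b) :
    ∃ f : ℕ → α, f 0 = a0 ∧ (∀ n, good (f n)) ∧ ∀ n, r (f n) (f (n + 1)) := by
  classical
  choose g hg1 hg2 using step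
  let f : ℕ → α := fun n => Nat.rec a0 (fun _ x => if h : good x then g x h else x) n
  have hgood : ∀ n, good (f n) := by
    intro n
    induction n with
    | zero => exact h0
    | succ n ih =>
      show good (if h : good (f n) then g (f n) h else f n)
      rw [dif_pos ih]
      exact hg1 _ ih
  refine ⟨f, rfl, hgood, fun n => ?_⟩
  show r (f n) (if h : good (f n) then g (f n) h else f n)
  rw [dif_pos (hgood n)]
  exact hg2 _ _

end Aux17

/-- (1) `π̄` embeds `AM(P)`, ordered by domination, into the initial segments of `Q`
ordered by inclusion, and if `P` is well-founded then `Q` embeds into `AM(P)`;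
(2) `π̄` induces an embedding of the non-principal ideals of `P` into those of `Q`,
both ordered by inclusion; (3) if `P` has no infinite antichain then this embedding is
surjective, so the non-principal ideals of `P` and of `Q` are order-isomorphic. -/
theorem stmt17 {P : Type*} [PartialOrder P] :
    ((∀ A : Set P, IsMaxAntichainRel (· ≤ ·) A →
        ∀ q q' : PredQuot P, predQuotLE q q' → q' ∈ piBar A → q ∈ piBar A) ∧
      (∀ A B : Set P, IsMaxAntichainRel (· ≤ ·) A → IsMaxAntichainRel (· ≤ ·) B →
        (DomRel (· ≤ ·) A B ↔ piBar A ⊆ piBar B)) ∧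
      (WellFoundedLT P →
        ∃ g : PredQuot P → {A : Set P // IsMaxAntichainRel ((· ≤ ·) : P → P → Prop) A},
          ∀ q q' : PredQuot P, predQuotLE q q' ↔ DomRel (· ≤ ·) (g q).1 (g q').1)) ∧
    ((∀ J : Set P, IsIdealRel (· ≤ ·) J → ¬ IsPrincipalRel (· ≤ ·) J →
        IsIdealRel predQuotLE (piBar J) ∧ ¬ IsPrincipalRel predQuotLE (piBar J)) ∧
      (∀ J J' : Set P, IsIdealRel (· ≤ ·) J → ¬ IsPrincipalRel (· ≤ ·) J →
        IsIdealRel (· ≤ ·) J' → ¬ IsPrincipalRel (· ≤ ·) J' →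
        (J ⊆ J' ↔ piBar J ⊆ piBar J'))) ∧
    ((¬ ∃ A : Set P, IsAntichain (· ≤ ·) A ∧ A.Infinite) →
      ∀ K : Set (PredQuot P), IsIdealRel predQuotLE K → ¬ IsPrincipalRel predQuotLE K →
        ∃ J : Set P, IsIdealRel (· ≤ ·) J ∧ ¬ IsPrincipalRel (· ≤ ·) J ∧ piBar J = K) := by
  
  classical
  refine ⟨⟨?_, ?_, ?_⟩, ⟨?_, ?_⟩, ?_⟩
  -- (1a) piBar of a maximal antichain is an initial segment
  · rintro A _ q q' hqq' ⟨s, hs, hq'⟩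
    exact ⟨s, hs, predQuotLE_trans' hqq' hq'⟩
  -- (1b) domination iff inclusion of piBar
  · intro A B hA hB
    constructor
    · rintro hdom q ⟨a, ha, hq⟩
      obtain ⟨b, hb, hab⟩ := hdom a ha
      exact ⟨b, hb, predQuotLE_trans' hq (le_predLE' hab)⟩
    · intro hsub a ha
      obtain ⟨b, hb, hab⟩ := hsub (show predPi a ∈ piBar A from ⟨a, ha, predQuotLE_refl' _⟩)
      have hab' : predLE a b := hab
      obtain ⟨b', hb', hc⟩ := maxAC_comp hB a
      rcases hc with h1 | h1
      · exact ⟨b', hb', h1⟩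
      · rcases eq_or_lt_of_le h1 with rfl | h1
        · exact ⟨b', hb', le_rfl⟩
        · exact absurd (hab' b' h1).le (hB.1 hb' hb (ne_of_lt (hab' b' h1)))
  -- (1c) well-founded case: Q embeds into AM(P)
  · intro wf
    have hw : WellFounded ((· < ·) : P → P → Prop) := wf.wf
    refine ⟨Quotient.lift
      (fun x => (⟨ACof x, ACof_max hw x⟩ : {A : Set P // IsMaxAntichainRel (· ≤ ·) A}))
      (fun a b hab => Subtype.ext (ACof_congr hab.1 hab.2)), ?_⟩
    intro q q'
    obtain ⟨a, rfl⟩ := predQuot_exists_rep q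
    obtain ⟨b, rfl⟩ := predQuot_exists_rep q'
    exact ACof_dom hw a b
  -- (2a) piBar of a non-principal ideal is a non-principal ideal
  · intro J hJ hJnp
    obtain ⟨⟨j0, hj0⟩, hdc, hdir⟩ := hJ
    constructor
    · refine ⟨⟨predPi j0, j0, hj0, predQuotLE_refl' _⟩, ?_, ?_⟩
      · rintro x y hxy ⟨s, hs, hy⟩
        exact ⟨s, hs, predQuotLE_trans' hxy hy⟩
      · rintro x ⟨s, hs, hx⟩ y ⟨t, ht, hy⟩
        obtain ⟨z, hz, hsz, htz⟩ := hdir s hs t ht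
        exact ⟨predPi z, ⟨z, hz, predQuotLE_refl' _⟩,
          predQuotLE_trans' hx (le_predLE' hsz), predQuotLE_trans' hy (le_predLE' htz)⟩
    · rintro ⟨qa, hqa, hmax⟩
      obtain ⟨a, rfl⟩ := predQuot_exists_rep qa
      obtain ⟨s, hs, has⟩ := hqa
      have has' : predLE a s := has
      refine hJnp ⟨s, hs, fun j hj => ?_⟩
      obtain ⟨z, hz, hjz, hsz⟩ := hdir j hj s hs
      have hza : predLE z a := hmax (predPi z) ⟨z, hz, predQuotLE_refl' _⟩
      have hzs : predLE z s := predLE_trans' hza has'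
      rcases eq_or_lt_of_le hsz with rfl | hlt
      · exact hjz
      · exact absurd (hzs s hlt) (lt_irrefl s)
  -- (2b) inclusion of ideals iff inclusion of piBar
  · intro J J' hJ hJnp hJ' _
    constructor
    · rintro hsub q ⟨s, hs, hq⟩
      exact ⟨s, hsub hs, hq⟩
    · intro hsub j hj
      have hk : ∃ k ∈ J, j < k := by
        by_contra hno
        push_neg at hno
        refine hJnp ⟨j, hj, fun x hx => ?_⟩
        obtain ⟨z, hz, hjz, hxz⟩ := hJ.2.2 j hj x hx
        rcases eq_or_lt_of_le hjz with rfl | hlt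
        · exact hxz
        · exact absurd hlt (hno z hz)
      obtain ⟨k, hk', hjk⟩ := hk
      obtain ⟨s, hs, hks⟩ := hsub (show predPi k ∈ piBar J from ⟨k, hk', predQuotLE_refl' _⟩)
      have hks' : predLE k s := hks
      exact hJ'.2.1 j s (hks' j hjk).le hs
  -- (3) surjectivity when P has no infinite antichain
  · intro hA K hK hKnp
    obtain ⟨⟨q0, hq0⟩, hKdc, hKdir⟩ := hK
    have hup : ∀ q ∈ K, ∃ q' ∈ K, predQuotLE q q' ∧ ¬ predQuotLE q' q := by
      intro q hq
      have hex : ∃ x ∈ K, ¬ predQuotLE x q := by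
        by_contra hno
        push_neg at hno
        exact hKnp ⟨q, hq, hno⟩
      obtain ⟨x, hx, hxq⟩ := hex
      obtain ⟨z, hz, hqz, hxz⟩ := hKdir q hq x hx
      exact ⟨z, hz, hqz, fun hzq => hxq (predQuotLE_trans' hxz hzq)⟩
    have step : ∀ w : P, predPi w ∈ K →
        ∃ w' : P, (predPi w' ∈ K) ∧ (predLE w w' ∧ ¬ predLE w' w) := by
      intro w hw
      obtain ⟨q', hq', h1, h2⟩ := hup (predPi w) hw
      obtain ⟨w', rfl⟩ := predQuot_exists_rep q'
      exact ⟨w', hq', h1, h2⟩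
    set J : Set P := {p : P | ∃ w : P, predPi w ∈ K ∧ p < w} with hJdef
    have claimB : ∀ w : P, predPi w ∈ K → ∃ s ∈ J, predLE w s := by
      intro w hw
      obtain ⟨f, hf0, hgood, hstep⟩ := exists_chain17
        (fun a b : P => predLE a b ∧ ¬ predLE b a) (fun p : P => predPi p ∈ K) w hw step
      have mono : ∀ m n : ℕ, m ≤ n → predLE (f m) (f n) := by
        intro m n h
        induction h with
        | refl => exact predLE_refl' _
        | step _ ih => exact predLE_trans' ih (hstep _).1
      have strict : ∀ m n : ℕ, m < n → ¬ predLE (f n) (f m) := by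
        intro m n h hle
        exact (hstep m).2 (predLE_trans' (mono (m + 1) n h) hle)
      have hnef : ∀ m n : ℕ, m < n → f m ≠ f n := by
        intro m n h heq
        exact strict m n h (by rw [heq]; exact predLE_refl' _)
      by_cases hcomp : ∃ m n : ℕ, m < n ∧ f m ≤ f n
      · obtain ⟨m, n, hmn, hle⟩ := hcomp
        have hlt : f m < f n := lt_of_le_of_ne hle (hnef m n hmn)
        refine ⟨f m, ⟨f n, hgood n, hlt⟩, ?_⟩
        have h0 : predLE (f 0) (f m) := mono 0 m (Nat.zero_le m)
        rwa [hf0] at h0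
      · exfalso
        push_neg at hcomp
        refine hA ⟨Set.range f, ?_, Set.infinite_range_of_injective ?_⟩
        · rintro x ⟨m, rfl⟩ y ⟨n, rfl⟩ hxy hle
          rcases lt_or_gt_of_ne (show m ≠ n from fun h => hxy (congrArg f h)) with h | h
          · exact hcomp m n h hle
          · exact strict n m h (le_predLE' hle)
        · intro m n h
          by_contra hne'
          rcases lt_or_gt_of_ne hne' with hlt | hlt
          · exact hnef m n hlt h
          · exact hnef n m hlt h.symm
    have hJdc : ∀ x y : P, x ≤ y → y ∈ J → x ∈ J := by
      rintro x y hxy ⟨w, hw, hyw⟩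
      exact ⟨w, hw, lt_of_le_of_lt hxy hyw⟩
    have hJne : J.Nonempty := by
      obtain ⟨w0, rfl⟩ := predQuot_exists_rep q0
      obtain ⟨w1, hw1, _, h2⟩ := step w0 hq0
      obtain ⟨u, hu1, _⟩ : ∃ x, x < w1 ∧ ¬ x < w0 := by
        by_contra hno
        push_neg at hno
        exact h2 fun x hx => hno x hx
      exact ⟨u, w1, hw1, hu1⟩
    have hJdir : ∀ x ∈ J, ∀ y ∈ J, ∃ z ∈ J, x ≤ z ∧ y ≤ z := by
      rintro x ⟨w, hw, hxw⟩ y ⟨w', hw', hyw'⟩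
      obtain ⟨qz, hqz, h1, h2⟩ := hKdir (predPi w) hw (predPi w') hw'
      obtain ⟨z, rfl⟩ := predQuot_exists_rep qz
      obtain ⟨s, hsJ, hzs⟩ := claimB z hqz
      have h1' : predLE w z := h1
      have h2' : predLE w' z := h2
      exact ⟨s, hsJ, (hzs x (h1' x hxw)).le, (hzs y (h2' y hyw')).le⟩
    have hpiBar : piBar J = K := by
      apply Set.Subset.antisymm
      · rintro q ⟨s, ⟨w, hw, hsw⟩, hq⟩
        exact hKdc q (predPi w) (predQuotLE_trans' hq (le_predLE' hsw.le)) hw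
      · intro q hq
        obtain ⟨w, rfl⟩ := predQuot_exists_rep q
        obtain ⟨s, hsJ, hws⟩ := claimB w hq
        exact ⟨s, hsJ, hws⟩
    refine ⟨J, ⟨hJne, hJdc, hJdir⟩, ?_, hpiBar⟩
    rintro ⟨a, haJ, hmax⟩
    apply hKnp
    refine ⟨predPi a, ?_, ?_⟩
    · rw [← hpiBar]
      exact ⟨a, haJ, predQuotLE_refl' _⟩
    · intro q hq
      rw [← hpiBar] at hq
      obtain ⟨s, hsJ, hqs⟩ := hq
      exact predQuotLE_trans' hqs (le_predLE' (hmax s hsJ))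
end

section
/- Let P be a partially ordered set and define the relation on P × {0,1} by: (x,i) ≤ (y,j) iff (i = j and x ≤ y) or (i = 0, j = 1, and there exist incomparable elements x',y' of P with x ≤ x' and y' ≤ y). This relation is a partial order, making a poset P(2), and the map sending x to the pair {(x,0),(x,1)} is an order-embedding of P into AM₂(P(2)), the set of two-element maximal antichains of P(2) ordered by domination; in particular each {(x,0),(x,1)} is a two-element maximal antichain of P(2). -/
open Set

/-- The order of the poset `P(2)` on `P × {0, 1}` (here `{0, 1}` is `Bool`):
`(x, i) ≤ (y, j)` iff `i = j` and `x ≤ y`, or `i = 0`, `j = 1` and there exist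
incomparable `x', y'` with `x ≤ x'` and `y' ≤ y`. -/
def twoLE {P : Type*} [PartialOrder P] (u v : P × Bool) : Prop :=
  (u.2 = v.2 ∧ u.1 ≤ v.1) ∨
    (u.2 = false ∧ v.2 = true ∧
      ∃ x' y' : P, ¬ x' ≤ y' ∧ ¬ y' ≤ x' ∧ u.1 ≤ x' ∧ y' ≤ v.1)

/-- `twoLE` is a partial order on `P × {0, 1}`; each `{(x, 0), (x, 1)}` is a two-element
maximal antichain of `P(2)`; and `x ↦ {(x, 0), (x, 1)}` is an order-embedding of `P`
into `AM₂(P(2))` ordered by domination. -/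
theorem stmt18 {P : Type*} [PartialOrder P] :
    (∀ u : P × Bool, twoLE u u) ∧
    (∀ u v w : P × Bool, twoLE u v → twoLE v w → twoLE u w) ∧
    (∀ u v : P × Bool, twoLE u v → twoLE v u → u = v) ∧
    (∀ x : P, IsMaxAntichainRel twoLE {(x, false), (x, true)} ∧
      ({(x, false), (x, true)} : Set (P × Bool)).ncard = 2) ∧
    (∀ x y : P, x ≤ y ↔ DomRel twoLE {(x, false), (x, true)} {(y, false), (y, true)}) := by
  constructor
  · intro u; exact Or.inl ⟨rfl, le_refl _⟩
  constructor
  · rintro ⟨a, i⟩ ⟨b, j⟩ ⟨c, k⟩ huv hvw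
    simp only [twoLE] at huv hvw ⊢
    rcases huv with ⟨h1, hab⟩ | ⟨hi, hj, x', y', hxy, hyx, hax, hyb⟩
    · rcases hvw with ⟨h2, hbc⟩ | ⟨hj2, hk, x', y', hxy, hyx, hbx, hyc⟩
      · exact Or.inl ⟨h1.trans h2, hab.trans hbc⟩
      · exact Or.inr ⟨h1.trans hj2, hk, x', y', hxy, hyx, hab.trans hbx, hyc⟩
    · rcases hvw with ⟨h2, hbc⟩ | ⟨hj2, hk, _⟩
      · exact Or.inr ⟨hi, h2 ▸ hj, x', y', hxy, hyx, hax, hyb.trans hbc⟩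
      · rw [hj] at hj2; exact absurd hj2 (by simp)
  constructor
  · rintro ⟨a, i⟩ ⟨b, j⟩ huv hvu
    simp only [twoLE] at huv hvu
    rcases huv with ⟨h1, hab⟩ | ⟨hi, hj, _⟩
    · rcases hvu with ⟨_, hba⟩ | ⟨hj2, hi2, _⟩
      · exact Prod.ext (le_antisymm hab hba) h1
      · rw [hi2, hj2] at h1; exact absurd h1 (by simp)
    · rcases hvu with ⟨h2, _⟩ | ⟨hj2, _⟩
      · rw [hi] at h2; rw [hj] at h2; exact absurd h2 (by simp)
      · rw [hj] at hj2; exact absurd hj2 (by simp)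
  constructor
  · intro x
    have hne : ((x, false) : P × Bool) ≠ (x, true) := by simp
    have hanti : IsAntichain twoLE {(x, false), (x, true)} := by
      rintro u hu v hv hne' huv
      simp only [Set.mem_insert_iff, Set.mem_singleton_iff] at hu hv
      rcases hu with rfl | rfl <;> rcases hv with rfl | rfl
      · exact hne' rfl
      · rcases huv with ⟨h1, _⟩ | ⟨_, _, x', y', hxy, hyx, hax, hyb⟩
        · simp at h1
        · exact (hyx (hyb.trans hax)).elim
      · rcases huv with ⟨h1, _⟩ | ⟨h1, _⟩ <;> simp at h1
      · exact hne' rfl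
    refine ⟨⟨hanti, ?_⟩, Set.ncard_pair hne⟩
    intro B hB hsub
    apply Set.Subset.antisymm hsub
    intro u hu
    by_contra huA
    -- u is comparable to (x,false) or (x,true)
    obtain ⟨a, i⟩ := u
    have hxf : ((x, false) : P × Bool) ∈ B := hsub (by simp)
    have hxt : ((x, true) : P × Bool) ∈ B := hsub (by simp)
    have hne1 : (a, i) ≠ ((x, false) : P × Bool) := by
      intro h; exact huA (h ▸ (by simp : ((x, false) : P × Bool) ∈ ({(x, false), (x, true)} : Set (P × Bool))))
    have hne2 : (a, i) ≠ ((x, true) : P × Bool) := by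
      intro h; exact huA (h ▸ (by simp : ((x, true) : P × Bool) ∈ ({(x, false), (x, true)} : Set (P × Bool))))
    cases i
    · by_cases h : a ≤ x
      · exact hB hu hxf hne1 (Or.inl ⟨rfl, h⟩)
      by_cases h' : x ≤ a
      · exact hB hxf hu hne1.symm (Or.inl ⟨rfl, h'⟩)
      · exact hB hu hxt (by simp) (Or.inr ⟨rfl, rfl, a, x, h, h', le_refl a, le_refl x⟩)
    · by_cases h : a ≤ x
      · exact hB hu hxt hne2 (Or.inl ⟨rfl, h⟩)
      by_cases h' : x ≤ a
      · exact hB hxt hu hne2.symm (Or.inl ⟨rfl, h'⟩)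
      · exact hB hxf hu (by simp) (Or.inr ⟨rfl, rfl, x, a, h', h, le_refl x, le_refl a⟩)
  · intro x y
    constructor
    · intro hxy u hu
      simp only [Set.mem_insert_iff, Set.mem_singleton_iff] at hu
      rcases hu with rfl | rfl
      · exact ⟨(y, false), by simp, Or.inl ⟨rfl, hxy⟩⟩
      · exact ⟨(y, true), by simp, Or.inl ⟨rfl, hxy⟩⟩
    · intro h
      obtain ⟨b, hb, hle⟩ := h (x, true) (by simp)
      simp only [Set.mem_insert_iff, Set.mem_singleton_iff] at hb
      rcases hb with rfl | rfl
      · rcases hle with ⟨h1, _⟩ | ⟨h1, _⟩ <;> simp at h1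
      · rcases hle with ⟨_, h1⟩ | ⟨h1, _⟩
        · exact h1
        · simp at h1
end

section
/- Let R be Rado's poset. Then: (a) for every integer m, the set ⋃AM_m(R) of elements of R belonging to some m-element maximal antichain, with the order induced from R, is better-quasi-ordered; (b) R order-embeds into AM(R), the set of maximal antichains of R ordered by domination. -/
open Set

/-- The carrier of Rado's poset: pairs `(m, n)` of naturals with `m < n`. -/
def Rado := {p : ℕ × ℕ // p.1 < p.2}

/-- The order of Rado's poset: `(m, n) ≤ (m', n')` iff `m = m'` and `n ≤ n'`, or `n < m'`. -/
def radoLE (u v : Rado) : Prop :=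
  (u.1.1 = v.1.1 ∧ u.1.2 ≤ v.1.2) ∨ u.1.2 < v.1.1

/-!
Every element `x` of an `m`-element maximal antichain `A` of `R` has first coordinate `< m`: if
some `c ≤ x.1` were not a first coordinate of `A`, maximality would put an element of `A`
entirely below `c`, hence below `x`. On such elements the order of `R` contains the disjoint
union of `m` copies of `ℕ` (equal first coordinates, compare second coordinates). A finite
disjoint union of copies of `ℕ` is bqo: by Nash-Williams' partition theorem for barriers
(proved by Galvin–Prikry combinatorial forcing) a map from a barrier can be restricted to a
sub-barrier on which it either stays in one row or avoids it, and a map into `ℕ` is good at any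
point where it is minimal, paired with a `◁`-successor of that point.

For (b), `(m, n)` is sent to the maximal antichain `{(i, m + 1) | i ≤ m} ∪ {(m + 1, n + 2)}`.
-/

lemma Set.Infinite.inter_Ioi {Y : Set ℕ} (hY : Y.Infinite) (n : ℕ) : (Y ∩ Ioi n).Infinite := by
  simpa only [sdiff_eq, compl_Iic] using hY.sdiff (finite_Iic n)

def tailIn (X : Set ℕ) (s : Finset ℕ) : Set ℕ := {y ∈ X | ∀ x ∈ s, x < y}

lemma tailIn_subset (X : Set ℕ) (s : Finset ℕ) : tailIn X s ⊆ X := fun _ hy => hy.1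

lemma Set.Infinite.tailIn {X : Set ℕ} (hX : X.Infinite) (s : Finset ℕ) :
    (tailIn X s).Infinite :=
  (hX.inter_Ioi (s.sup id)).mono fun _ hy =>
    ⟨hy.1, fun _ hx => (Finset.le_sup (f := id) hx).trans_lt hy.2⟩

lemma InitSegSet.subset_or_subset {s t : Finset ℕ} {X : Set ℕ} (hs : InitSegSet s X)
    (ht : InitSegSet t X) : s ⊆ t ∨ t ⊆ s := by
  by_contra! h
  obtain ⟨x, hxs, hxt⟩ := Finset.not_subset.1 h.1
  obtain ⟨y, hyt, hys⟩ := Finset.not_subset.1 h.2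
  exact lt_asymm (hs.2 x hxs y (ht.1 hyt) hys) (ht.2 y hyt x (hs.1 hxs) hxt)

lemma InitSegSet.initSeg_of_subset {s r : Finset ℕ} {X : Set ℕ} (hs : InitSegSet s X)
    (hr : InitSegSet r X) (h : s ⊆ r) : InitSeg s r :=
  ⟨h, fun x hx y hy hys => hs.2 x hx y (hr.1 hy) hys⟩

lemma initSegSet_union {s : Finset ℕ} {Z : Set ℕ} (h : ∀ z ∈ Z, ∀ x ∈ s, x < z) :
    InitSegSet s (↑s ∪ Z) :=
  ⟨subset_union_left, fun x hx y hy hys => hy.elim (fun h => absurd h hys) fun hy => h y hy x hx⟩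

lemma InitSegSet.insert {t : Finset ℕ} {Y : Set ℕ} (ht : InitSegSet t Y) {a : ℕ}
    (ha : ∀ y ∈ Y, a < y) : InitSegSet (insert a t) (insert a Y) := by
  refine ⟨by simpa only [Finset.coe_insert] using insert_subset_insert ht.1, ?_⟩
  intro x hx y hy hyx
  have hyY : y ∈ Y := hy.resolve_left fun h => hyx (h ▸ Finset.mem_insert_self a t)
  rcases Finset.mem_insert.1 hx with rfl | hx
  · exact ha y hyY
  · exact ht.2 x hx y hyY fun h => hyx (Finset.mem_insert_of_mem h)

lemma subset_unionOf {B : Set (Finset ℕ)} {s : Finset ℕ} (hs : s ∈ B) :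
    (s : Set ℕ) ⊆ unionOf B :=
  subset_biUnion_of_mem (u := fun s : Finset ℕ => (s : Set ℕ)) hs

lemma unionOf_infinite {B : Set (Finset ℕ)} (hB : B.Infinite) : (unionOf B).Infinite := fun hU =>
  hB <| hU.toFinset.powerset.finite_toSet.subset fun s hs => by
    simpa only [Finset.coe_powerset, mem_preimage, mem_powerset_iff, Finite.coe_toFinset]
      using subset_unionOf hs

lemma IsBarrier.nonempty_of_mem {B : Set (Finset ℕ)} (hB : IsBarrier B) {s : Finset ℕ}
    (hs : s ∈ B) : s.Nonempty := by
  refine Finset.nonempty_iff_ne_empty.2 fun h => hB.1.1 ((finite_singleton s).subset fun t ht => ?_)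
  exact (hB.2 s hs t ht (h ▸ Finset.empty_subset t)).symm

open Classical in
/-- The element of `B` that is an initial segment of `X` (junk value `∅` if there is none). -/
noncomputable def segIn (B : Set (Finset ℕ)) (X : Set ℕ) : Finset ℕ :=
  if h : ∃ s ∈ B, s.Nonempty ∧ InitSegSet s X then h.choose else ∅

lemma IsBlock.segIn_spec {B : Set (Finset ℕ)} (hB : IsBlock B) {X : Set ℕ}
    (hXB : X ⊆ unionOf B) (hX : X.Infinite) :
    segIn B X ∈ B ∧ (segIn B X).Nonempty ∧ InitSegSet (segIn B X) X := by
  have h := hB.2 X hXB hX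
  rw [segIn, dif_pos h]
  exact h.choose_spec

lemma IsBarrier.segIn_eq {B : Set (Finset ℕ)} (hB : IsBarrier B) {X : Set ℕ}
    (hXB : X ⊆ unionOf B) (hX : X.Infinite) {s : Finset ℕ} (hs : s ∈ B)
    (hsX : InitSegSet s X) : segIn B X = s := by
  obtain ⟨hmem, -, hseg⟩ := hB.1.segIn_spec hXB hX
  exact (hseg.subset_or_subset hsX).elim (hB.2 _ hmem _ hs) fun h => (hB.2 _ hs _ hmem h).symm

/-- Taking `t` to be the element of `B` below `(s \ {min s}) ∪ Z`, for `Z` the part of `⋃ B`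
above `s`, the sets `s` and `insert (min s) t` are both initial segments of `s ∪ Z`. -/
lemma IsBarrier.exists_tri {B : Set (Finset ℕ)} (hB : IsBarrier B) {s : Finset ℕ} (hs : s ∈ B) :
    ∃ t ∈ B, Tri s t := by
  have hne := hB.nonempty_of_mem hs
  set a := s.min' hne
  set Z := unionOf B ∩ Ioi (s.max' hne)
  have hsZ : ∀ z ∈ Z, ∀ x ∈ s, x < z := fun z hz x hx => (s.le_max' x hx).trans_lt hz.2
  set Y : Set ℕ := ↑(s.erase a) ∪ Z
  have haY : ∀ y ∈ Y, a < y := by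
    rintro y (hy | hy)
    · exact s.min'_lt_of_mem_erase_min' hne hy
    · exact hsZ y hy a (s.min'_mem hne)
  obtain ⟨ht, -, htY⟩ := hB.1.segIn_spec
    (union_subset ((Finset.coe_subset.2 (s.erase_subset a)).trans (subset_unionOf hs))
      inter_subset_left)
    ((unionOf_infinite hB.1.1).inter_Ioi _ |>.mono subset_union_right)
  set t := segIn B Y
  have hat : a ∉ t := fun h => lt_irrefl a (haY a (htY.1 h))
  have hYs : insert a Y = ↑s ∪ Z := by
    rw [← insert_union, Finset.coe_erase, insert_sdiff_singleton,
      insert_eq_of_mem (s.min'_mem hne)]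
  have hsW : InitSegSet s (↑s ∪ Z) := initSegSet_union hsZ
  have hrW : InitSegSet (insert a t) (↑s ∪ Z) := hYs ▸ htY.insert haY
  have hts : ¬ t ⊆ s := fun h => hat (hB.2 t ht s hs h ▸ s.min'_mem hne)
  have hsr : s ⊆ insert a t :=
    (hsW.subset_or_subset hrW).resolve_right fun h => hts ((Finset.subset_insert a t).trans h)
  refine ⟨t, ht, insert a t, hsW.initSeg_of_subset hrW hsr, ?_, a, Finset.mem_insert_self a t,
    ?_, (Finset.erase_insert hat).symm⟩
  · intro h
    exact hts (h ▸ Finset.subset_insert a t)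
  · intro b hb
    rcases Finset.mem_insert.1 hb with rfl | hb
    · exact le_rfl
    · exact (haY b (htY.1 hb)).le

lemma GoodPair.mono {Q : Type*} {le : Q → Q → Prop} {B C : Set (Finset ℕ)}
    {f : Finset ℕ → Q} (h : GoodPair le C f) (hCB : C ⊆ B) : GoodPair le B f :=
  let ⟨s, hs, t, ht, hst, hle⟩ := h
  ⟨s, hCB hs, t, hCB ht, hst, hle⟩

lemma IsBarrier.goodPair_le {α : Type*} [LinearOrder α] [WellFoundedLT α]
    {B : Set (Finset ℕ)} (hB : IsBarrier B) (g : Finset ℕ → α) : GoodPair (· ≤ ·) B g := by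
  obtain ⟨s, hs, hmin⟩ := (InvImage.wf g wellFounded_lt).has_min B hB.1.1.nonempty
  obtain ⟨t, ht, hst⟩ := hB.exists_tri hs
  exact ⟨s, hs, t, ht, hst, not_lt.1 (hmin t ht)⟩

lemma exists_infinite_forall_mem_finset {D : Finset ℕ → Set ℕ → Prop}
    (hD : ∀ s {Y Y'}, Y' ⊆ Y → D s Y → D s Y')
    (hex : ∀ s {Y}, Y.Infinite → ∃ Y' ⊆ Y, Y'.Infinite ∧ D s Y') (S : Finset (Finset ℕ))
    {Y : Set ℕ} (hY : Y.Infinite) : ∃ Y' ⊆ Y, Y'.Infinite ∧ ∀ s ∈ S, D s Y' := by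
  induction S using Finset.induction_on generalizing Y with
  | empty => exact ⟨Y, subset_rfl, hY, by simp⟩
  | insert a S _ ih =>
    obtain ⟨Y₁, hY₁Y, hY₁, hY₁S⟩ := ih hY
    obtain ⟨Y₂, hY₂Y₁, hY₂, hY₂a⟩ := hex a hY₁
    refine ⟨Y₂, hY₂Y₁.trans hY₁Y, hY₂, fun s hs => ?_⟩
    rcases Finset.mem_insert.1 hs with rfl | hs
    · exact hY₂a
    · exact hD s hY₂Y₁ (hY₁S s hs)

/-- A fusion argument: `x n` is the least element of the `n`-th set `Y n` of a decreasing
sequence, and `Y (n + 1)` lies above `x n` and works for every `s ⊆ {0, …, x n}`. -/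
lemma exists_infinite_forall_tailIn {D : Finset ℕ → Set ℕ → Prop}
    (hD : ∀ s {Y Y'}, Y' ⊆ Y → D s Y → D s Y')
    (hex : ∀ s {Y}, Y.Infinite → ∃ Y' ⊆ Y, Y'.Infinite ∧ D s Y') {Y₀ : Set ℕ}
    (hY₀ : Y₀.Infinite) :
    ∃ X ⊆ Y₀, X.Infinite ∧ ∀ s : Finset ℕ, ↑s ⊆ X → s.Nonempty → D s (tailIn X s) := by
  have hstep : ∀ Y : {Y : Set ℕ // Y.Infinite}, ∃ Y' : {Y : Set ℕ // Y.Infinite},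
      Y'.1 ⊆ Y.1 ∩ Ioi (sInf Y.1) ∧ ∀ s ∈ (Finset.range (sInf Y.1 + 1)).powerset, D s Y'.1 :=
    fun Y => let ⟨Y', hY'Y, hY', hD'⟩ :=
      exists_infinite_forall_mem_finset hD hex _ (Y.2.inter_Ioi (sInf Y.1))
    ⟨⟨Y', hY'⟩, hY'Y, hD'⟩
  choose F hFsub hFD using hstep
  set Y : ℕ → Set ℕ := fun n => (F^[n] ⟨Y₀, hY₀⟩).1
  set x : ℕ → ℕ := fun n => sInf (Y n)
  have hYsucc (n : ℕ) : Y (n + 1) ⊆ Y n ∩ Ioi (x n) := by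
    simp only [Y, x, Function.iterate_succ_apply']
    exact hFsub _
  have hYanti : Antitone Y := antitone_nat_of_succ_le fun n => (hYsucc n).trans inter_subset_left
  have hxY (n : ℕ) : x n ∈ Y n := Nat.sInf_mem (F^[n] ⟨Y₀, hY₀⟩).2.nonempty
  have hx : StrictMono x := strictMono_nat_of_lt_succ fun n => (hYsucc n (hxY (n + 1))).2
  refine ⟨range x, ?_, infinite_range_of_injective hx.injective, fun s hsX hs => ?_⟩
  · rintro _ ⟨n, rfl⟩
    exact hYanti (Nat.zero_le n) (hxY n)
  obtain ⟨m, hm⟩ := hsX (s.max'_mem hs)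
  have hsm : s ∈ (Finset.range (x m + 1)).powerset := Finset.mem_powerset.2 fun a ha =>
    Finset.mem_range.2 (Nat.lt_succ_of_le (hm ▸ s.le_max' a ha))
  have hDm : D s (Y (m + 1)) := by
    simpa only [Y, x, Function.iterate_succ_apply'] using hFD (F^[m] ⟨Y₀, hY₀⟩) s hsm
  refine hD s (fun y hy => ?_) hDm
  obtain ⟨⟨j, rfl⟩, hj⟩ := hy
  have hmj : m < j := hx.lt_iff_lt.1 (hm ▸ hj _ (s.max'_mem hs))
  exact hYanti hmj (hxY j)

/-- Each new point `G c` lies above `c` and outside the finitely many bad one-point extensions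
of the sets `s ⊆ {0, …, c}`. -/
lemma exists_infinite_forall_finset_subset {P : Finset ℕ → Prop} {X : Set ℕ} (hX : X.Infinite)
    (h₀ : P ∅) (hext : ∀ s : Finset ℕ, ↑s ⊆ X → P s → {y ∈ tailIn X s | ¬ P (insert y s)}.Finite) :
    ∃ X' ⊆ X, X'.Infinite ∧ ∀ s : Finset ℕ, ↑s ⊆ X' → P s := by
  have hstep (c : ℕ) : ∃ y ∈ X, c < y ∧
      ∀ s ⊆ Finset.range (c + 1), ↑s ⊆ X → P s → P (insert y s) := by
    have hbad : (⋃ s ∈ {s : Finset ℕ | s ⊆ Finset.range (c + 1) ∧ ↑s ⊆ X ∧ P s},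
        {y ∈ tailIn X s | ¬ P (insert y s)}).Finite :=
      ((Finset.range (c + 1)).powerset.finite_toSet.subset fun s hs =>
        Finset.mem_powerset.2 hs.1).biUnion fun s hs => hext s hs.2.1 hs.2.2
    obtain ⟨y, ⟨hyX, hcy⟩, hy⟩ := ((hX.inter_Ioi c).sdiff hbad).nonempty
    refine ⟨y, hyX, hcy, fun s hsc hsX hs => by_contra fun hys => hy ?_⟩
    refine mem_biUnion (x := s) ⟨hsc, hsX, hs⟩ ⟨⟨hyX, fun a ha => ?_⟩, hys⟩
    exact (Nat.lt_succ_iff.1 (Finset.mem_range.1 (hsc ha))).trans_lt hcy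
  choose G hGX hGlt hGP using hstep
  set z : ℕ → ℕ := fun n => G^[n] 0
  have hzsucc (n : ℕ) : z (n + 1) = G (z n) := Function.iterate_succ_apply' G n 0
  have hz : StrictMono z := strictMono_nat_of_lt_succ fun n => hzsucc n ▸ hGlt (z n)
  refine ⟨range fun n => z (n + 1), ?_, infinite_range_of_injective
    (hz.injective.comp Nat.succ_injective), fun s => ?_⟩
  · rintro _ ⟨n, rfl⟩
    simpa only [hzsucc] using hGX (z n)
  induction s using Finset.induction_on_max with
  | empty => exact fun _ => h₀
  | insert a s hsa ih =>
    intro hs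
    obtain ⟨n, rfl⟩ := hs (Finset.mem_insert_self _ s)
    have hsX : ↑s ⊆ range fun n => z (n + 1) :=
      (Finset.coe_subset.2 (Finset.subset_insert _ s)).trans hs
    simp only [hzsucc]
    refine hGP (z n) s (fun b hb => ?_) (hsX.trans ?_) (ih hsX)
    · obtain ⟨j, rfl⟩ := hsX hb
      exact Finset.mem_range.2 (Nat.lt_succ_of_le (hz.monotone
        (Nat.succ_le_of_lt (Nat.succ_lt_succ_iff.1 (hz.lt_iff_lt.1 (hsa _ hb))))))
    · rintro _ ⟨j, rfl⟩
      simpa only [hzsucc] using hGX (z j)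

section Forcing

variable {B B₁ : Set (Finset ℕ)}

/-- Galvin–Prikry combinatorial forcing for the partition of the barrier `B` by `B₁`. -/
def Accepts (B B₁ : Set (Finset ℕ)) (s : Finset ℕ) (Y : Set ℕ) : Prop :=
  ∀ Z ⊆ Y, Z.Infinite → (∀ z ∈ Z, ∀ x ∈ s, x < z) → segIn B (↑s ∪ Z) ∈ B₁

def Rejects (B B₁ : Set (Finset ℕ)) (s : Finset ℕ) (Y : Set ℕ) : Prop :=
  ∀ Z ⊆ Y, Z.Infinite → ¬ Accepts B B₁ s Z

lemma Accepts.mono {s : Finset ℕ} {Y Y' : Set ℕ} (h : Accepts B B₁ s Y) (hY : Y' ⊆ Y) :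
    Accepts B B₁ s Y' :=
  fun Z hZ => h Z (hZ.trans hY)

lemma Rejects.mono {s : Finset ℕ} {Y Y' : Set ℕ} (h : Rejects B B₁ s Y) (hY : Y' ⊆ Y) :
    Rejects B B₁ s Y' :=
  fun Z hZ => h Z (hZ.trans hY)

lemma exists_accepts_or_rejects (s : Finset ℕ) {Y : Set ℕ} (hY : Y.Infinite) :
    ∃ Y' ⊆ Y, Y'.Infinite ∧ (Accepts B B₁ s Y' ∨ Rejects B B₁ s Y') := by
  by_cases h : Rejects B B₁ s Y
  · exact ⟨Y, subset_rfl, hY, Or.inr h⟩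
  · simp only [Rejects, not_forall, not_not] at h
    obtain ⟨Z, hZY, hZ, hacc⟩ := h
    exact ⟨Z, hZY, hZ, Or.inl hacc⟩

lemma IsBarrier.accepts_of_mem (hB : IsBarrier B) {s : Finset ℕ} (hsB : s ∈ B) (hsB₁ : s ∈ B₁)
    {Y : Set ℕ} (hYB : Y ⊆ unionOf B) : Accepts B B₁ s Y := by
  intro Z hZY hZ hsZ
  rwa [hB.segIn_eq (union_subset (subset_unionOf hsB) (hZY.trans hYB))
    (hZ.mono subset_union_right) hsB (initSegSet_union hsZ)]

/-- Otherwise `s` would accept the infinite set of those `y`. -/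
lemma Rejects.finite_setOf_accepts_insert {s : Finset ℕ} {X : Set ℕ}
    (hrej : Rejects B B₁ s (tailIn X s)) :
    {y ∈ tailIn X s | Accepts B B₁ (insert y s) (tailIn X (insert y s))}.Finite := by
  by_contra hA
  refine hrej _ (fun y hy => hy.1) hA fun Z hZA hZ hsZ => ?_
  set y₀ := sInf Z
  have hy₀ : y₀ ∈ Z := Nat.sInf_mem hZ.nonempty
  have hZ' : Z ∩ Ioi y₀ ⊆ tailIn X (insert y₀ s) := fun z hz =>
    ⟨(hZA hz.1).1.1, Finset.forall_mem_insert _ _ _ |>.2 ⟨hz.2, fun x hx => hsZ z hz.1 x hx⟩⟩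
  have hunion : ↑(insert y₀ s) ∪ (Z ∩ Ioi y₀) = ↑s ∪ Z := by
    ext z
    have hy₀z : z ∈ Z → y₀ ≤ z := fun hz => Nat.sInf_le hz
    simp only [Finset.coe_insert, mem_union, mem_insert_iff, Finset.mem_coe, mem_inter_iff,
      mem_Ioi]
    grind
  rw [← hunion]
  refine (hZA hy₀).2 _ hZ' (hZ.inter_Ioi y₀) fun z hz x hx => ?_
  rcases Finset.mem_insert.1 hx with rfl | hx
  · exact hz.2
  · exact hsZ z hz.1 x hx

/-- The two diagonalisations of the Galvin–Prikry argument: first every nonempty `s ⊆ X`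
decides its tail, then, starting from the rejection by `∅`, rejection spreads to every
finite subset of some infinite `X' ⊆ X`. -/
lemma Rejects.exists_forall_rejects {Y₀ : Set ℕ} (hY₀ : Y₀.Infinite)
    (hrej : Rejects B B₁ ∅ Y₀) : ∃ X ⊆ Y₀, X.Infinite ∧
      ∀ s : Finset ℕ, ↑s ⊆ X → ∃ Y ⊆ Y₀, Y.Infinite ∧ Rejects B B₁ s Y := by
  obtain ⟨X, hXY₀, hX, hdec⟩ := exists_infinite_forall_tailIn (D := fun s Y =>
    Accepts B B₁ s Y ∨ Rejects B B₁ s Y) (fun s _ _ hY h => h.imp (·.mono hY) (·.mono hY))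
    (fun s _ hY => exists_accepts_or_rejects s hY) hY₀
  have hext (s : Finset ℕ) (hsX : ↑s ⊆ X) (_ : Rejects B B₁ s (tailIn X s)) :
      {y ∈ tailIn X s | ¬ Rejects B B₁ (insert y s) (tailIn X (insert y s))}.Finite := by
    refine (Rejects.finite_setOf_accepts_insert ‹_›).subset fun y ⟨hy, hnrej⟩ =>
      ⟨hy, (hdec _ ?_ (Finset.insert_nonempty y s)).resolve_right hnrej⟩
    rw [Finset.coe_insert]
    exact insert_subset hy.1 hsX
  obtain ⟨X', hX'X, hX', hrej'⟩ := exists_infinite_forall_finset_subset hX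
    (hrej.mono ((tailIn_subset X ∅).trans hXY₀)) hext
  exact ⟨X', hX'X.trans hXY₀, hX', fun s hs => ⟨tailIn X s,
    (tailIn_subset X s).trans hXY₀, hX.tailIn s, hrej' s hs⟩⟩

end Forcing

lemma IsBarrier.restrict {B : Set (Finset ℕ)} (hB : IsBarrier B) {X : Set ℕ}
    (hXB : X ⊆ unionOf B) (hX : X.Infinite) (P : Finset ℕ → Prop)
    (hP : ∀ W ⊆ X, W.Infinite → P (segIn B W)) : IsBarrier {s | s ∈ B ∧ P s ∧ ↑s ⊆ X} := by
  have hseg (W : Set ℕ) (hWX : W ⊆ X) (hW : W.Infinite) :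
      segIn B W ∈ {s | s ∈ B ∧ P s ∧ ↑s ⊆ X} ∧ (segIn B W).Nonempty ∧
        InitSegSet (segIn B W) W :=
    let ⟨hmem, hne, hsW⟩ := hB.1.segIn_spec (hWX.trans hXB) hW
    ⟨⟨hmem, hP W hWX hW, hsW.1.trans hWX⟩, hne, hsW⟩
  refine ⟨⟨fun hfin => hX ((hfin.biUnion fun s _ => s.finite_toSet).subset fun x hx => ?_),
    fun W hW hWi => ⟨_, hseg W (hW.trans (iUnion₂_subset fun s hs => hs.2.2)) hWi⟩⟩,
    fun s hs t ht => hB.2 s hs.1 t ht.1⟩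
  -- `x` is the least element of `X ∩ Ici x`, so it lies in every nonempty initial segment
  obtain ⟨hmem, ⟨a, ha⟩, hsW⟩ := hseg (X ∩ Ici x) inter_subset_left
    ((hX.inter_Ioi x).mono fun y hy => ⟨hy.1, le_of_lt (mem_Ioi.1 hy.2)⟩)
  refine mem_biUnion hmem (by_contra fun hxs => ?_)
  exact (hsW.2 a ha x ⟨hx, self_mem_Ici⟩ hxs).not_ge (hsW.1 ha).2

theorem IsBarrier.exists_subset_isBarrier_subset_or_subset_compl {B : Set (Finset ℕ)}
    (hB : IsBarrier B) (B₁ : Set (Finset ℕ)) : ∃ C ⊆ B, IsBarrier C ∧ (C ⊆ B₁ ∨ C ⊆ B₁ᶜ) := by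
  obtain ⟨Y₀, hY₀B, hY₀, hacc | hrej⟩ :=
    exists_accepts_or_rejects (B := B) (B₁ := B₁) ∅ (unionOf_infinite hB.1.1)
  · refine ⟨_, fun s hs => hs.1, hB.restrict hY₀B hY₀ (· ∈ B₁) fun W hW hWi => ?_,
      Or.inl fun s hs => hs.2.1⟩
    simpa using hacc W hW hWi (by simp)
  · obtain ⟨X, hXY₀, hX, hXrej⟩ := hrej.exists_forall_rejects hY₀
    refine ⟨_, fun s hs => hs.1, hB.restrict (hXY₀.trans hY₀B) hX (· ∉ B₁)
      fun W hW hWi hmem => ?_, Or.inr fun s hs => hs.2.1⟩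
    obtain ⟨hsB, -, hsW⟩ := hB.1.segIn_spec ((hW.trans hXY₀).trans hY₀B) hWi
    obtain ⟨Y, hYY₀, hY, hYrej⟩ := hXrej _ (hsW.1.trans hW)
    exact hYrej Y subset_rfl hY (hB.accepts_of_mem hsB hmem (hYY₀.trans hY₀B))

/-- The disjoint union of copies of `ℕ` indexed by the first coordinate. -/
def SameRowLE (p q : ℕ × ℕ) : Prop := p.1 = q.1 ∧ p.2 ≤ q.2

theorem IsBarrier.goodPair_sameRowLE (k : ℕ) {B : Set (Finset ℕ)} (hB : IsBarrier B)
    (g : Finset ℕ → ℕ × ℕ) (hg : ∀ s ∈ B, (g s).1 < k) : GoodPair SameRowLE B g := by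
  induction k generalizing B with
  | zero =>
    obtain ⟨s, hs⟩ := hB.1.1.nonempty
    exact absurd (hg s hs) (Nat.not_lt_zero _)
  | succ k ih =>
    obtain ⟨C, hCB, hC, hCk | hCk⟩ :=
      hB.exists_subset_isBarrier_subset_or_subset_compl {s | (g s).1 = k}
    · obtain ⟨s, hs, t, ht, hst, hle⟩ := hC.goodPair_le fun s => (g s).2
      exact ⟨s, hCB hs, t, hCB ht, hst, (hCk hs).trans (hCk ht).symm, hle⟩
    · exact (ih hC fun s hs => lt_of_le_of_ne (Nat.lt_succ_iff.1 (hg s (hCB hs))) (hCk hs)).mono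
        hCB

lemma IsMaxAntichainRel.exists_rel_of_notMem {Q : Type*} {r : Q → Q → Prop} {A : Set Q}
    (hA : IsMaxAntichainRel r A) {v : Q} (hv : v ∉ A) : ∃ a ∈ A, r a v ∨ r v a := by
  by_contra! h
  exact hv (hA.2 (insert v A) (hA.1.insert (fun a ha _ => (h a ha).1) fun a ha _ => (h a ha).2)
    (subset_insert v A) ▸ mem_insert v A)

lemma IsAntichain.isMaxAntichainRel {Q : Type*} {r : Q → Q → Prop} {A : Set Q}
    (hA : IsAntichain r A) (h : ∀ v ∉ A, ∃ a ∈ A, r a v ∨ r v a) : IsMaxAntichainRel r A := by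
  refine ⟨hA, fun B hB hAB => hAB.antisymm fun v hv => by_contra fun hvA => ?_⟩
  obtain ⟨a, ha, hav | hva⟩ := h v hvA
  · exact hB (hAB ha) hv (ne_of_mem_of_not_mem ha hvA) hav
  · exact hB hv (hAB ha) (ne_of_mem_of_not_mem ha hvA).symm hva

namespace Rado

def mk (a b : ℕ) (h : a < b) : Rado := ⟨(a, b), h⟩

@[simp] lemma fst_mk {a b : ℕ} (h : a < b) : (mk a b h).1.1 = a := rfl

@[simp] lemma snd_mk {a b : ℕ} (h : a < b) : (mk a b h).1.2 = b := rfl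

lemma ext {u v : Rado} (h1 : u.1.1 = v.1.1) (h2 : u.1.2 = v.1.2) : u = v :=
  Subtype.ext (Prod.ext h1 h2)

lemma radoLE_or_radoLE_of_fst_eq {u v : Rado} (h : u.1.1 = v.1.1) : radoLE u v ∨ radoLE v u :=
  (le_total u.1.2 v.1.2).imp (fun hle => Or.inl ⟨h, hle⟩) fun hle => Or.inl ⟨h.symm, hle⟩

variable {A : Set Rado}

lemma fst_injOn (hA : IsAntichain radoLE A) : InjOn (fun a : Rado => a.1.1) A := by
  intro a ha b hb hab
  by_contra hne
  rcases radoLE_or_radoLE_of_fst_eq hab with h | h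
  · exact hA ha hb hne h
  · exact hA hb ha (Ne.symm hne) h

lemma fst_le_snd_of_isAntichain (hA : IsAntichain radoLE A) {a x : Rado} (ha : a ∈ A)
    (hx : x ∈ A) : a.1.1 ≤ x.1.2 := by
  by_contra! h
  have hne : x ≠ a := by rintro rfl; exact absurd x.2 (by omega)
  exact hA hx ha hne (Or.inr h)

lemma finite_of_isAntichain (hA : IsAntichain radoLE A) : A.Finite := by
  rcases A.eq_empty_or_nonempty with rfl | ⟨x, hx⟩
  · exact finite_empty
  · refine Finite.of_finite_image ((finite_Iic x.1.2).subset ?_) (fst_injOn hA)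
    rintro _ ⟨a, ha, rfl⟩
    exact fst_le_snd_of_isAntichain hA ha hx

/-- Otherwise `(c, d)` with `d` large could be added to the antichain. -/
lemma exists_snd_lt_of_forall_fst_ne (hA : IsMaxAntichainRel radoLE A) {x : Rado} (hx : x ∈ A)
    {c : ℕ} (hc : ∀ a ∈ A, a.1.1 ≠ c) : ∃ a ∈ A, a.1.2 < c := by
  have hcd : c < c + x.1.2 + 1 := by omega
  obtain ⟨a, ha, hav | hva⟩ := hA.exists_rel_of_notMem fun hv => hc _ hv (fst_mk hcd)
  · rcases hav with ⟨h, -⟩ | h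
    · exact absurd h (hc a ha)
    · exact ⟨a, ha, h⟩
  · rcases hva with ⟨h, -⟩ | h
    · exact absurd h.symm (hc a ha)
    · have := fst_le_snd_of_isAntichain hA.1 ha hx
      simp only [snd_mk] at h
      omega

lemma fst_lt_of_ncard_eq (hA : IsMaxAntichainRel radoLE A) {m : ℕ} (hcard : A.ncard = m)
    {x : Rado} (hx : x ∈ A) : x.1.1 < m := by
  have hsub : Iic x.1.1 ⊆ (fun a : Rado => a.1.1) '' A := by
    intro c hc
    by_contra hcA
    obtain ⟨a, ha, hac⟩ := exists_snd_lt_of_forall_fst_ne hA hx fun a ha h => hcA ⟨a, ha, h⟩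
    have hcx : c ≠ x.1.1 := fun h => hcA ⟨x, hx, h.symm⟩
    have hc : c ≤ x.1.1 := hc
    have hne : a ≠ x := by rintro rfl; exact absurd a.2 (by omega)
    exact hA.1 ha hx hne (Or.inr (by omega))
  calc x.1.1 + 1 = (Iic x.1.1).ncard := (ncard_Iic_nat _).symm
    _ ≤ ((fun a : Rado => a.1.1) '' A).ncard :=
      ncard_le_ncard hsub ((finite_of_isAntichain hA.1).image _)
    _ = m := by rw [(fst_injOn hA.1).ncard_image, hcard]

/-- For `x = (m, n)`, the pairs `(i, m + 1)` with `i ≤ m` lie below every pair starting above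
`m + 1`, and the extra pair `(m + 1, n + 2)` records `n`. -/
def maxAntichainOf (x : Rado) : Set Rado :=
  {y | (y.1.1 ≤ x.1.1 ∧ y.1.2 = x.1.1 + 1) ∨ (y.1.1 = x.1.1 + 1 ∧ y.1.2 = x.1.2 + 2)}

lemma mem_maxAntichainOf {x y : Rado} : y ∈ maxAntichainOf x ↔
    (y.1.1 ≤ x.1.1 ∧ y.1.2 = x.1.1 + 1) ∨ (y.1.1 = x.1.1 + 1 ∧ y.1.2 = x.1.2 + 2) :=
  Iff.rfl

lemma mk_mem_maxAntichainOf {x : Rado} {a b : ℕ} (h : a < b) : mk a b h ∈ maxAntichainOf x ↔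
    (a ≤ x.1.1 ∧ b = x.1.1 + 1) ∨ (a = x.1.1 + 1 ∧ b = x.1.2 + 2) :=
  Iff.rfl

lemma isMaxAntichainRel_maxAntichainOf (x : Rado) :
    IsMaxAntichainRel radoLE (maxAntichainOf x) := by
  have hx := x.2
  refine IsAntichain.isMaxAntichainRel (fun u hu v hv hne hle => ?_) fun v _ => ?_
  · rw [mem_maxAntichainOf] at hu hv
    have := u.2
    exact hne (ext (by unfold radoLE at hle; omega) (by unfold radoLE at hle; omega))
  · rcases lt_trichotomy v.1.1 (x.1.1 + 1) with h | h | h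
    · exact ⟨mk v.1.1 (x.1.1 + 1) h, (mk_mem_maxAntichainOf h).2 (by omega),
        radoLE_or_radoLE_of_fst_eq (fst_mk h)⟩
    · exact ⟨mk (x.1.1 + 1) (x.1.2 + 2) (by omega), (mk_mem_maxAntichainOf _).2 (by omega),
        radoLE_or_radoLE_of_fst_eq (h ▸ fst_mk _)⟩
    · exact ⟨mk x.1.1 (x.1.1 + 1) (by omega), (mk_mem_maxAntichainOf _).2 (by omega),
        Or.inl (Or.inr (by simp only [snd_mk]; omega))⟩

lemma radoLE_iff_domRel_maxAntichainOf (x y : Rado) :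
    radoLE x y ↔ DomRel radoLE (maxAntichainOf x) (maxAntichainOf y) := by
  have hx := x.2
  have hy := y.2
  constructor
  · rintro hxy u hu
    have := u.2
    rw [mem_maxAntichainOf] at hu
    unfold radoLE at hxy
    rcases hu with ⟨hu1, hu2⟩ | ⟨hu1, hu2⟩ <;> rcases hxy with ⟨h1, h2⟩ | h1
    · exact ⟨u, Or.inl ⟨by omega, by omega⟩, Or.inl ⟨rfl, le_rfl⟩⟩
    · exact ⟨mk y.1.1 (y.1.1 + 1) (by omega), (mk_mem_maxAntichainOf _).2 (by omega),
        Or.inr (by simp only [fst_mk]; omega)⟩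
    · exact ⟨mk (y.1.1 + 1) (y.1.2 + 2) (by omega), (mk_mem_maxAntichainOf _).2 (by omega),
        Or.inl ⟨by simp only [fst_mk]; omega, by simp only [snd_mk]; omega⟩⟩
    · exact ⟨mk (x.1.1 + 1) (y.1.1 + 1) (by omega), (mk_mem_maxAntichainOf _).2 (by omega),
        Or.inl ⟨by simp only [fst_mk]; omega, by simp only [snd_mk]; omega⟩⟩
  · intro hdom
    obtain ⟨w, hw, hle⟩ := hdom (mk (x.1.1 + 1) (x.1.2 + 2) (by omega))
      ((mk_mem_maxAntichainOf _).2 (by omega))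
    rw [mem_maxAntichainOf] at hw
    simp only [radoLE, fst_mk, snd_mk] at hle
    unfold radoLE
    omega

end Rado

/-- (a) For every integer `m`, the set `⋃AM_m(R)` of elements of Rado's poset `R`
belonging to some `m`-element maximal antichain, with the induced order, is bqo;
(b) `R` order-embeds into `AM(R)`, the maximal antichains of `R` ordered by domination. -/
theorem stmt19 :
    (∀ m : ℕ, IsBqo (fun x y : {x : Rado //
        ∃ A : Set Rado, IsMaxAntichainRel radoLE A ∧ A.ncard = m ∧ x ∈ A} =>
      radoLE x.1 y.1)) ∧
    ∃ g : Rado → {A : Set Rado // IsMaxAntichainRel radoLE A},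
      ∀ x y : Rado, radoLE x y ↔ DomRel radoLE (g x).1 (g y).1 := by
  refine ⟨fun m B hB f => ?_, ⟨fun x => ⟨_, Rado.isMaxAntichainRel_maxAntichainOf x⟩,
    Rado.radoLE_iff_domRel_maxAntichainOf⟩⟩
  have hrow (s : Finset ℕ) : (f s).1.1.1 < m :=
    let ⟨_, hA, hcard, hmem⟩ := (f s).2
    Rado.fst_lt_of_ncard_eq hA hcard hmem
  obtain ⟨s, hs, t, ht, hst, hle⟩ :=
    hB.goodPair_sameRowLE m (fun s => (f s).1.1) fun s _ => hrow s
  exact ⟨s, hs, t, ht, hst, Or.inl hle⟩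
end
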